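/- arXiv:2503.18807 — 6 statements merged into one kernel-verified Lean document; each statement's English description precedes it below -/
import Mathlib

section
/- Deterministic per-path version of the Minibatch SGD convergence bound: let F : ℝ^d → ℝ be differentiable, L-smooth, and bounded below by F*. Let T ≥ 1, 0 < γ ≤ 1/L, and let w₀, w₁, …, w_T ∈ ℝ^d and g₀, …, g_{T−1} ∈ ℝ^d satisfy w_{t+1} = w_t − γ g_t for t = 0,…,T−1. Then (1/T) Σ_{t=0}^{T−1} ‖∇F(w_t)‖² ≤ 2(F(w₀) − F*)/(γT) + (1/T) Σ_{t=0}^{T−1} ‖g_t − ∇F(w_t)‖². -/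
open scoped RealInnerProductSpace

/-- Deterministic per-path Minibatch SGD bound: for iterates
`w_{t+1} = w_t − γ g_t` with `0 < γ ≤ 1/L`,
`(1/T) Σ_{t<T} ‖∇F(w_t)‖² ≤ 2(F(w₀) − F*)/(γT) + (1/T) Σ_{t<T} ‖g_t − ∇F(w_t)‖²`. -/
theorem minibatch_sgd_per_path
    {d : ℕ} (F : EuclideanSpace ℝ (Fin d) → ℝ)
    (gradF : EuclideanSpace ℝ (Fin d) → EuclideanSpace ℝ (Fin d))
    (hdiff : ∀ w, HasGradientAt F (gradF w) w)
    (L : ℝ)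
    (hsmooth : ∀ w₁ w₂, F w₂ ≤ F w₁ + ⟪gradF w₁, w₂ - w₁⟫ + L / 2 * ‖w₂ - w₁‖ ^ 2)
    (Fstar : ℝ) (hlb : ∀ w, Fstar ≤ F w)
    (T : ℕ) (hT : 1 ≤ T)
    (γ : ℝ) (hγ0 : 0 < γ) (hγL : γ ≤ 1 / L)
    (w g : ℕ → EuclideanSpace ℝ (Fin d))
    (hupd : ∀ t < T, w (t + 1) = w t - γ • g t) :
    (1 / (T : ℝ)) * ∑ t ∈ Finset.range T, ‖gradF (w t)‖ ^ 2 ≤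
      2 * (F (w 0) - Fstar) / (γ * T) +
        (1 / (T : ℝ)) * ∑ t ∈ Finset.range T, ‖g t - gradF (w t)‖ ^ 2 := by
  have hL : 0 < L := by
    by_contra h
    push_neg at h
    have : 1 / L ≤ 0 := one_div_nonpos.mpr h
    linarith
  have hγL' : γ * L ≤ 1 := by
    rw [le_div_iff₀ hL] at hγL; linarith
  have key : ∀ t < T, γ / 2 * ‖gradF (w t)‖ ^ 2 ≤
      F (w t) - F (w (t + 1)) + γ / 2 * ‖g t - gradF (w t)‖ ^ 2 := by
    intro t ht
    have h1 := hsmooth (w t) (w (t + 1))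
    rw [hupd t ht] at h1
    have hsub : w t - γ • g t - w t = -(γ • g t) := by abel
    rw [hsub] at h1
    have hin : ⟪gradF (w t), -(γ • g t)⟫ = -(γ * ⟪gradF (w t), g t⟫) := by
      rw [inner_neg_right, real_inner_smul_right]
    have hno : ‖-(γ • g t)‖ ^ 2 = γ ^ 2 * ‖g t‖ ^ 2 := by
      rw [norm_neg, norm_smul, Real.norm_eq_abs, mul_pow, sq_abs]
    rw [hin, hno] at h1
    have hexp : ‖g t - gradF (w t)‖ ^ 2 =
        ‖g t‖ ^ 2 - 2 * ⟪g t, gradF (w t)⟫ + ‖gradF (w t)‖ ^ 2 :=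
      norm_sub_sq_real _ _
    have hsymm : ⟪g t, gradF (w t)⟫ = ⟪gradF (w t), g t⟫ := real_inner_comm _ _
    rw [hsymm] at hexp
    rw [hupd t ht]
    nlinarith [sq_nonneg ‖g t‖, mul_pos hγ0 hγ0, sq_nonneg (γ * ‖g t‖)]
  have hsum : γ / 2 * ∑ t ∈ Finset.range T, ‖gradF (w t)‖ ^ 2 ≤
      (F (w 0) - Fstar) + γ / 2 * ∑ t ∈ Finset.range T, ‖g t - gradF (w t)‖ ^ 2 := by
    rw [Finset.mul_sum, Finset.mul_sum]
    have h2 : ∑ t ∈ Finset.range T, γ / 2 * ‖gradF (w t)‖ ^ 2 ≤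
        ∑ t ∈ Finset.range T, (F (w t) - F (w (t + 1)) + γ / 2 * ‖g t - gradF (w t)‖ ^ 2) := by
      apply Finset.sum_le_sum
      intro t ht
      exact key t (Finset.mem_range.mp ht)
    rw [Finset.sum_add_distrib, Finset.sum_range_sub' (fun t => F (w t))] at h2
    have := hlb (w T)
    linarith
  have hTpos : (0 : ℝ) < T := by exact_mod_cast hT
  set S1 := ∑ t ∈ Finset.range T, ‖gradF (w t)‖ ^ 2
  set S2 := ∑ t ∈ Finset.range T, ‖g t - gradF (w t)‖ ^ 2
  have hS1 : S1 ≤ 2 * (F (w 0) - Fstar) / γ + S2 := by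
    rw [← sub_le_iff_le_add, le_div_iff₀ hγ0]
    nlinarith [hsum]
  have h3 : (1 / (T : ℝ)) * S1 ≤ (1 / (T : ℝ)) * (2 * (F (w 0) - Fstar) / γ + S2) :=
    mul_le_mul_of_nonneg_left hS1 (by positivity)
  calc (1 / (T : ℝ)) * S1 ≤ (1 / (T : ℝ)) * (2 * (F (w 0) - Fstar) / γ + S2) := h3
    _ = 2 * (F (w 0) - Fstar) / (γ * T) + (1 / (T : ℝ)) * S2 := by
        field_simp
end

section
/- Local SGD drift bound (per sample path): let M, K be positive integers, η > 0, and η̃ = ηK with 2L²η̃² < 1. For each m ∈ [M], let f_m(·; x) : ℝ^d → ℝ (x ∈ Ω_m) be differentiable with L-Lipschitz gradient in its first argument, let F_m : ℝ^d → ℝ be differentiable, and suppose ‖∇f_m(u; x) − ∇F_m(u)‖ ≤ σ for all u ∈ ℝ^d, x ∈ Ω_m. Fix w ∈ ℝ^d and samples x^{(m,0)},…,x^{(m,K−1)} ∈ Ω_m for each m, and define local iterates by w^{(m,0)} = w and w^{(m,k+1)} = w^{(m,k)} − η ∇f_m(w^{(m,k)}; x^{(m,k)}) for k = 0,…,K−1.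 Then (1/(MK)) Σ_{m=1}^M Σ_{k=0}^{K−1} ‖w^{(m,k)} − w‖² ≤ (4η̃² / (1 − 2L²η̃²)) (σ² + (1/M) Σ_{m=1}^M ‖∇F_m(w)‖²). -/
open scoped RealInnerProductSpace

set_option maxHeartbeats 1000000 in
/-- Local SGD drift bound (per sample path): with `η̃ = ηK` and
`2L²η̃² < 1`, the average squared drift of the local iterates satisfies
`(1/(MK)) Σ_{m,k} ‖w^{(m,k)} − w‖² ≤ (4η̃²/(1 − 2L²η̃²)) (σ² + (1/M) Σ_m ‖∇F_m(w)‖²)`. -/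
theorem local_sgd_drift_bound
    {d : ℕ} {M K : ℕ} (hM : 0 < M) (hK : 0 < K)
    (η L σ : ℝ) (hη : 0 < η)
    (hstep : 2 * L ^ 2 * (η * K) ^ 2 < 1)
    (X : Fin M → Type*)
    (f : ∀ m, EuclideanSpace ℝ (Fin d) → X m → ℝ)
    (gradf : ∀ m, EuclideanSpace ℝ (Fin d) → X m → EuclideanSpace ℝ (Fin d))
    (hfdiff : ∀ m x u, HasGradientAt (fun v => f m v x) (gradf m u x) u)
    (hflip : ∀ m x u v, ‖gradf m u x - gradf m v x‖ ≤ L * ‖u - v‖)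
    (Fm : Fin M → EuclideanSpace ℝ (Fin d) → ℝ)
    (gradFm : Fin M → EuclideanSpace ℝ (Fin d) → EuclideanSpace ℝ (Fin d))
    (hFmdiff : ∀ m u, HasGradientAt (Fm m) (gradFm m u) u)
    (hnoise : ∀ m u x, ‖gradf m u x - gradFm m u‖ ≤ σ)
    (w : EuclideanSpace ℝ (Fin d))
    (xs : ∀ m : Fin M, ℕ → X m)
    (wl : Fin M → ℕ → EuclideanSpace ℝ (Fin d))
    (hwl0 : ∀ m, wl m 0 = w)
    (hwlrec : ∀ m, ∀ k < K, wl m (k + 1) = wl m k - η • gradf m (wl m k) (xs m k)) :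
    (1 / ((M : ℝ) * K)) * ∑ m : Fin M, ∑ k ∈ Finset.range K, ‖wl m k - w‖ ^ 2 ≤
      (4 * (η * K) ^ 2 / (1 - 2 * L ^ 2 * (η * K) ^ 2)) *
        (σ ^ 2 + (1 / (M : ℝ)) * ∑ m : Fin M, ‖gradFm m w‖ ^ 2) := by
  have hc : (0:ℝ) < 1 - 2 * L ^ 2 * (η * K) ^ 2 := by linarith
  have hσ : 0 ≤ σ :=
    le_trans (norm_nonneg _) (hnoise ⟨0, hM⟩ w (xs ⟨0, hM⟩ 0))
  have hKpos : (0:ℝ) < K := by exact_mod_cast hK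
  have hMpos : (0:ℝ) < M := by exact_mod_cast hM
  -- per-client bound
  have key : ∀ m : Fin M, ∑ k ∈ Finset.range K, ‖wl m k - w‖ ^ 2 ≤
      (4 * K * (η * K) ^ 2 / (1 - 2 * L ^ 2 * (η * K) ^ 2)) *
        (σ ^ 2 + ‖gradFm m w‖ ^ 2) := by
    intro m
    set G : ℝ := ‖gradFm m w‖ with hG
    set g : ℕ → EuclideanSpace ℝ (Fin d) := fun j => gradf m (wl m j) (xs m j) with hgdef
    set S : ℝ := ∑ k ∈ Finset.range K, ‖wl m k - w‖ ^ 2 with hS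
    have hSnn : 0 ≤ S := Finset.sum_nonneg fun _ _ => by positivity
    have hGnn : 0 ≤ G := norm_nonneg _
    -- representation of iterates
    have hrep : ∀ k ≤ K, wl m k - w = -(η • ∑ j ∈ Finset.range k, g j) := by
      intro k hk
      induction k with
      | zero => simp [hwl0]
      | succ n ih =>
        have hn : n < K := hk
        have ihn := ih (le_of_lt hn)
        rw [Finset.sum_range_succ, hwlrec m n hn]
        rw [sub_right_comm, ihn]
        module
    -- per-gradient bound
    have hg : ∀ j, ‖g j‖ ^ 2 ≤ 2 * L ^ 2 * ‖wl m j - w‖ ^ 2 + 4 * σ ^ 2 + 4 * G ^ 2 := by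
      intro j
      have h1 : ‖g j - gradf m w (xs m j)‖ ≤ L * ‖wl m j - w‖ := hflip m (xs m j) _ _
      have h2 : ‖gradf m w (xs m j) - gradFm m w‖ ≤ σ := hnoise m w (xs m j)
      have h3 : ‖g j‖ ≤ L * ‖wl m j - w‖ + σ + G := by
        have heq : g j = (g j - gradf m w (xs m j)) + (gradf m w (xs m j) - gradFm m w)
            + gradFm m w := by abel
        calc ‖g j‖ = ‖(g j - gradf m w (xs m j)) + (gradf m w (xs m j) - gradFm m w)
            + gradFm m w‖ := by rw [← heq]
          _ ≤ ‖g j - gradf m w (xs m j)‖ + ‖gradf m w (xs m j) - gradFm m w‖ + ‖gradFm m w‖ :=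
              norm_add₃_le
          _ ≤ L * ‖wl m j - w‖ + σ + G := by
              exact add_le_add (add_le_add h1 h2) le_rfl
      have ha : 0 ≤ L * ‖wl m j - w‖ := le_trans (norm_nonneg _) h1
      have h4 : ‖g j‖ ^ 2 ≤ (L * ‖wl m j - w‖ + σ + G) ^ 2 :=
        pow_le_pow_left₀ (norm_nonneg _) h3 2
      nlinarith [h4, sq_nonneg (L * ‖wl m j - w‖ - σ - G), sq_nonneg (σ - G)]
    -- drift bound for each k ≤ K
    have hD : ∀ k ≤ K, ‖wl m k - w‖ ^ 2 ≤
        η ^ 2 * K * (2 * L ^ 2 * S + K * (4 * σ ^ 2 + 4 * G ^ 2)) := by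
      intro k hk
      have hrepk := hrep k hk
      have hnorm : ‖wl m k - w‖ = η * ‖∑ j ∈ Finset.range k, g j‖ := by
        rw [hrepk, norm_neg, norm_smul, Real.norm_eq_abs, abs_of_pos hη]
      have h1 : ‖∑ j ∈ Finset.range k, g j‖ ≤ ∑ j ∈ Finset.range k, ‖g j‖ :=
        norm_sum_le _ _
      have h2 : (∑ j ∈ Finset.range k, ‖g j‖) ^ 2 ≤ k * ∑ j ∈ Finset.range k, ‖g j‖ ^ 2 := by
        simpa using sq_sum_le_card_mul_sum_sq (s := Finset.range k) (f := fun j => ‖g j‖)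
      have h3 : ∑ j ∈ Finset.range k, ‖g j‖ ^ 2 ≤ 2 * L ^ 2 * S + K * (4 * σ ^ 2 + 4 * G ^ 2) := by
        calc ∑ j ∈ Finset.range k, ‖g j‖ ^ 2
            ≤ ∑ j ∈ Finset.range k, (2 * L ^ 2 * ‖wl m j - w‖ ^ 2 + (4 * σ ^ 2 + 4 * G ^ 2)) := by
              apply Finset.sum_le_sum
              intro j _
              have := hg j
              linarith
          _ = 2 * L ^ 2 * (∑ j ∈ Finset.range k, ‖wl m j - w‖ ^ 2)
              + k * (4 * σ ^ 2 + 4 * G ^ 2) := by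
              rw [Finset.sum_add_distrib, ← Finset.mul_sum, Finset.sum_const,
                Finset.card_range, nsmul_eq_mul]
          _ ≤ 2 * L ^ 2 * S + K * (4 * σ ^ 2 + 4 * G ^ 2) := by
              have hsub : (∑ j ∈ Finset.range k, ‖wl m j - w‖ ^ 2) ≤ S := by
                rw [hS]
                apply Finset.sum_le_sum_of_subset_of_nonneg
                · exact Finset.range_subset_range.2 hk
                · intro i _ _; positivity
              have hkK : (k:ℝ) ≤ K := by exact_mod_cast hk
              have : (0:ℝ) ≤ 4 * σ ^ 2 + 4 * G ^ 2 := by positivity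
              nlinarith [sq_nonneg L]
      have hnormsq : ‖wl m k - w‖ ^ 2 = η ^ 2 * ‖∑ j ∈ Finset.range k, g j‖ ^ 2 := by
        rw [hnorm]; ring
      have hkK : (k:ℝ) ≤ K := by exact_mod_cast hk
      have hsumnn : 0 ≤ ∑ j ∈ Finset.range k, ‖g j‖ := Finset.sum_nonneg fun _ _ => norm_nonneg _
      have h4 : ‖∑ j ∈ Finset.range k, g j‖ ^ 2 ≤ (∑ j ∈ Finset.range k, ‖g j‖) ^ 2 := by
        apply sq_le_sq' _ h1
        linarith [norm_nonneg (∑ j ∈ Finset.range k, g j)]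
      have hsumsqnn : 0 ≤ ∑ j ∈ Finset.range k, ‖g j‖ ^ 2 :=
        Finset.sum_nonneg fun _ _ => by positivity
      have h5 : (k:ℝ) * ∑ j ∈ Finset.range k, ‖g j‖ ^ 2
          ≤ K * (2 * L ^ 2 * S + K * (4 * σ ^ 2 + 4 * G ^ 2)) := by
        have hb : (0:ℝ) ≤ 2 * L ^ 2 * S + K * (4 * σ ^ 2 + 4 * G ^ 2) :=
          add_nonneg (mul_nonneg (by positivity) hSnn) (by positivity)
        calc (k:ℝ) * ∑ j ∈ Finset.range k, ‖g j‖ ^ 2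
            ≤ (K:ℝ) * ∑ j ∈ Finset.range k, ‖g j‖ ^ 2 := by
              apply mul_le_mul_of_nonneg_right hkK hsumsqnn
          _ ≤ K * (2 * L ^ 2 * S + K * (4 * σ ^ 2 + 4 * G ^ 2)) :=
              mul_le_mul_of_nonneg_left h3 (le_of_lt hKpos)
      calc ‖wl m k - w‖ ^ 2 = η ^ 2 * ‖∑ j ∈ Finset.range k, g j‖ ^ 2 := hnormsq
        _ ≤ η ^ 2 * ((k:ℝ) * ∑ j ∈ Finset.range k, ‖g j‖ ^ 2) := by
            apply mul_le_mul_of_nonneg_left _ (by positivity)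
            exact le_trans h4 h2
        _ ≤ η ^ 2 * (K * (2 * L ^ 2 * S + K * (4 * σ ^ 2 + 4 * G ^ 2))) := by
            apply mul_le_mul_of_nonneg_left h5 (by positivity)
        _ = η ^ 2 * K * (2 * L ^ 2 * S + K * (4 * σ ^ 2 + 4 * G ^ 2)) := by ring
    -- sum over k
    have hSsum : S ≤ K * (η ^ 2 * K * (2 * L ^ 2 * S + K * (4 * σ ^ 2 + 4 * G ^ 2))) := by
      calc S = ∑ k ∈ Finset.range K, ‖wl m k - w‖ ^ 2 := hS
        _ ≤ ∑ k ∈ Finset.range K, η ^ 2 * K * (2 * L ^ 2 * S + K * (4 * σ ^ 2 + 4 * G ^ 2)) := by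
            apply Finset.sum_le_sum
            intro k hk
            exact hD k (le_of_lt (Finset.mem_range.1 hk))
        _ = K * (η ^ 2 * K * (2 * L ^ 2 * S + K * (4 * σ ^ 2 + 4 * G ^ 2))) := by
            rw [Finset.sum_const, Finset.card_range, nsmul_eq_mul]
    -- solve for S
    rw [div_mul_eq_mul_div, le_div_iff₀ hc]
    nlinarith [hSsum]
  -- aggregate over clients
  have hsum : ∑ m : Fin M, ∑ k ∈ Finset.range K, ‖wl m k - w‖ ^ 2 ≤
      ∑ m : Fin M, (4 * K * (η * K) ^ 2 / (1 - 2 * L ^ 2 * (η * K) ^ 2)) *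
        (σ ^ 2 + ‖gradFm m w‖ ^ 2) :=
    Finset.sum_le_sum fun m _ => key m
  have heq : (1 / ((M : ℝ) * K)) * ∑ m : Fin M,
      (4 * K * (η * K) ^ 2 / (1 - 2 * L ^ 2 * (η * K) ^ 2)) * (σ ^ 2 + ‖gradFm m w‖ ^ 2) =
      (4 * (η * K) ^ 2 / (1 - 2 * L ^ 2 * (η * K) ^ 2)) *
        (σ ^ 2 + (1 / (M : ℝ)) * ∑ m : Fin M, ‖gradFm m w‖ ^ 2) := by
    rw [← Finset.mul_sum, Finset.sum_add_distrib, Finset.sum_const, Finset.card_univ,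
      Fintype.card_fin, nsmul_eq_mul]
    field_simp
  calc (1 / ((M : ℝ) * K)) * ∑ m : Fin M, ∑ k ∈ Finset.range K, ‖wl m k - w‖ ^ 2
      ≤ (1 / ((M : ℝ) * K)) * ∑ m : Fin M,
        (4 * K * (η * K) ^ 2 / (1 - 2 * L ^ 2 * (η * K) ^ 2)) *
          (σ ^ 2 + ‖gradFm m w‖ ^ 2) := by
        apply mul_le_mul_of_nonneg_left hsum (by positivity)
    _ = _ := heq
end

section
/- Local SGD per-round descent (per sample path): let M, K be positive integers, η > 0, η̃ = ηK, θ ≥ 0, δ ≥ 1, and η̃ ≤ 1/(10Lδ²). For each m ∈ [M], let f_m(·; x) : ℝ^d → ℝ be differentiable with L-Lipschitz gradient in its first argument, F_m : ℝ^d → ℝ differentiable with ‖∇f_m(u; x) − ∇F_m(u)‖ ≤ σ for all u, x, and let F = (1/M) Σ_m F_m be L-smooth and bounded below by F*. Assume bounded gradient dissimilarity: (1/M) Σ_{m=1}^M ‖∇F_m(u)‖² ≤ θ² + δ²‖∇F(u)‖² for all u ∈ ℝ^d. Fix w ∈ ℝ^d and samples x^{(m,k)} ∈ Ω_m, define local iterates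 w^{(m,0)} = w, w^{(m,k+1)} = w^{(m,k)} − η ∇f_m(w^{(m,k)}; x^{(m,k)}), the aggregate w⁺ = (1/M) Σ_m w^{(m,K)}, and ḡ = (1/(MK)) Σ_{m,k} ∇f_m(w; x^{(m,k)}). Then F(w⁺) − F* ≤ F(w) − F* − (45/98) η̃ ‖∇F(w)‖² + η̃ ‖ḡ − ∇F(w)‖² + (40/98) L η̃² (θ² + σ²)/δ². -/
open scoped RealInnerProductSpace

theorem aux_young {E : Type*} [NormedAddCommGroup E] [InnerProductSpace ℝ E]
    (g u : E) (c : ℝ) (hc : 0 < c) :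
    -⟪g, u⟫ ≤ c/2 * ‖g‖^2 + 1/(2*c) * ‖u‖^2 := by
  have h := abs_real_inner_le_norm g u
  have key : c/2 * ‖g‖^2 + 1/(2*c) * ‖u‖^2 - ‖g‖*‖u‖ = (c*‖g‖-‖u‖)^2/(2*c) := by
    field_simp; ring
  have h2 : (0:ℝ) ≤ (c*‖g‖-‖u‖)^2/(2*c) := by positivity
  nlinarith [neg_abs_le ⟪g,u⟫]

theorem aux_three {E : Type*} [NormedAddCommGroup E] [InnerProductSpace ℝ E] (g u v : E) :
    ‖g+u+v‖^2 ≤ 3*‖g‖^2 + 3*‖u‖^2 + 3*‖v‖^2 := by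
  have h := norm_add₃_le (a := g) (b := u) (c := v)
  have := norm_nonneg g; have := norm_nonneg u; have := norm_nonneg v
  nlinarith [sq_nonneg (‖g‖-‖u‖), sq_nonneg (‖g‖-‖v‖), sq_nonneg (‖u‖-‖v‖), norm_nonneg (g+u+v)]

theorem aux_gauss (n : ℕ) : (∑ i ∈ Finset.range n, (i:ℝ)) = n*(n-1)/2 := by
  induction n with
  | zero => simp
  | succ k ih => rw [Finset.sum_range_succ, ih]; push_cast; ring

set_option maxHeartbeats 4000000 in
/-- Local SGD per-round descent (per sample path): with
`η̃ = ηK ≤ 1/(10Lδ²)`, bounded gradient noise `σ`, and bounded gradient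
dissimilarity `(θ, δ)`,
`F(w⁺) − F* ≤ F(w) − F* − (45/98) η̃ ‖∇F(w)‖² + η̃ ‖ḡ − ∇F(w)‖²
  + (40/98) L η̃² (θ² + σ²)/δ²`. -/
theorem local_sgd_descent_round
    {d : ℕ} {M K : ℕ} (hM : 0 < M) (hK : 0 < K)
    (η L σ θ δ : ℝ) (hη : 0 < η) (hθ : 0 ≤ θ) (hδ : 1 ≤ δ)
    (hstep : η * K ≤ 1 / (10 * L * δ ^ 2))
    (X : Fin M → Type*)
    (f : ∀ m, EuclideanSpace ℝ (Fin d) → X m → ℝ)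
    (gradf : ∀ m, EuclideanSpace ℝ (Fin d) → X m → EuclideanSpace ℝ (Fin d))
    (hfdiff : ∀ m x u, HasGradientAt (fun v => f m v x) (gradf m u x) u)
    (hflip : ∀ m x u v, ‖gradf m u x - gradf m v x‖ ≤ L * ‖u - v‖)
    (Fm : Fin M → EuclideanSpace ℝ (Fin d) → ℝ)
    (gradFm : Fin M → EuclideanSpace ℝ (Fin d) → EuclideanSpace ℝ (Fin d))
    (hFmdiff : ∀ m u, HasGradientAt (Fm m) (gradFm m u) u)
    (hnoise : ∀ m u x, ‖gradf m u x - gradFm m u‖ ≤ σ)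
    (F : EuclideanSpace ℝ (Fin d) → ℝ)
    (hF : ∀ u, F u = (1 / (M : ℝ)) * ∑ m : Fin M, Fm m u)
    (gradF : EuclideanSpace ℝ (Fin d) → EuclideanSpace ℝ (Fin d))
    (hFdiff : ∀ u, HasGradientAt F (gradF u) u)
    (hsmooth : ∀ w₁ w₂, F w₂ ≤ F w₁ + ⟪gradF w₁, w₂ - w₁⟫ + L / 2 * ‖w₂ - w₁‖ ^ 2)
    (Fstar : ℝ) (hlb : ∀ u, Fstar ≤ F u)
    (hbgd : ∀ u, (1 / (M : ℝ)) * ∑ m : Fin M, ‖gradFm m u‖ ^ 2 ≤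
      θ ^ 2 + δ ^ 2 * ‖gradF u‖ ^ 2)
    (w : EuclideanSpace ℝ (Fin d))
    (xs : ∀ m : Fin M, ℕ → X m)
    (wl : Fin M → ℕ → EuclideanSpace ℝ (Fin d))
    (hwl0 : ∀ m, wl m 0 = w)
    (hwlrec : ∀ m, ∀ k < K, wl m (k + 1) = wl m k - η • gradf m (wl m k) (xs m k)) :
    F ((1 / (M : ℝ)) • ∑ m : Fin M, wl m K) - Fstar ≤
      F w - Fstar - (45 / 98 : ℝ) * (η * K) * ‖gradF w‖ ^ 2 +
        (η * K) * ‖(1 / ((M : ℝ) * K)) •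
            (∑ m : Fin M, ∑ k ∈ Finset.range K, gradf m w (xs m k)) - gradF w‖ ^ 2 +
        (40 / 98 : ℝ) * L * (η * K) ^ 2 * (θ ^ 2 + σ ^ 2) / δ ^ 2 := by
  have hM' : (0:ℝ) < (M:ℝ) := by exact_mod_cast hM
  have hK' : (0:ℝ) < (K:ℝ) := by exact_mod_cast hK
  have hMne : (M:ℝ) ≠ 0 := hM'.ne'
  have hKne : (K:ℝ) ≠ 0 := hK'.ne'
  have hδ2 : (0:ℝ) < δ^2 := by nlinarith
  have ht : (0:ℝ) < η * K := by positivity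
  -- L > 0
  have hden : (0:ℝ) < 10 * L * δ ^ 2 := by
    by_contra h
    push_neg at h
    have : 1 / (10 * L * δ ^ 2) ≤ 0 := div_nonpos_of_nonneg_of_nonpos zero_le_one h
    linarith
  have hL : (0:ℝ) < L := by nlinarith
  -- step size bounds
  have he2 : L * (η * K) * δ ^ 2 ≤ 1/10 := by
    rw [le_div_iff₀ hden] at hstep; nlinarith
  have he1 : L * (η * K) ≤ 1/10 := by nlinarith [mul_pos hL ht]
  have hetpos : (0:ℝ) < L * (η * K) := mul_pos hL ht
  -- σ ≥ 0
  have hσ : (0:ℝ) ≤ σ := le_trans (norm_nonneg _) (hnoise ⟨0, hM⟩ w (xs ⟨0, hM⟩ 0))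
  -- gradient norm bound at arbitrary point
  have hGb : ∀ m u x, ‖gradf m u x‖ ≤ L * ‖u - w‖ + (σ + ‖gradFm m w‖) := by
    intro m u x
    have h1 := hflip m x u w
    have h2 := hnoise m w x
    have h3 : gradf m u x = (gradf m u x - gradf m w x) + (gradf m w x - gradFm m w)
        + gradFm m w := by abel
    calc ‖gradf m u x‖ = ‖(gradf m u x - gradf m w x) + (gradf m w x - gradFm m w)
        + gradFm m w‖ := by rw [← h3]
      _ ≤ ‖gradf m u x - gradf m w x‖ + ‖gradf m w x - gradFm m w‖ + ‖gradFm m w‖ :=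
          norm_add₃_le
      _ ≤ L * ‖u - w‖ + (σ + ‖gradFm m w‖) := by linarith
  -- iterate drift bound
  have hiter : ∀ m, ∀ k, k ≤ K → ‖wl m k - w‖ ≤ (10/9) * η * k * (σ + ‖gradFm m w‖) := by
    intro m k
    induction k with
    | zero => intro _; simp [hwl0]
    | succ k ih =>
      intro hk1
      have hk : k < K := hk1
      have ihk := ih hk.le
      have hGnn : (0:ℝ) ≤ σ + ‖gradFm m w‖ := add_nonneg hσ (norm_nonneg _)
      have hkK : η * L * (k:ℝ) ≤ 1/10 := by
        have hkc : (k:ℝ) ≤ K := by exact_mod_cast hk.le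
        nlinarith [mul_pos hη hL]
      rw [hwlrec m k hk]
      have heq : wl m k - η • gradf m (wl m k) (xs m k) - w
          = (wl m k - w) - η • gradf m (wl m k) (xs m k) := by abel
      rw [heq]
      have h1 : ‖(wl m k - w) - η • gradf m (wl m k) (xs m k)‖
          ≤ ‖wl m k - w‖ + η * ‖gradf m (wl m k) (xs m k)‖ := by
        refine (norm_sub_le _ _).trans ?_
        rw [norm_smul, Real.norm_eq_abs, abs_of_pos hη]
      have h2 := hGb m (wl m k) (xs m k)
      have f1 : η * L * ‖wl m k - w‖ ≤ η * L * ((10/9) * η * k * (σ + ‖gradFm m w‖)) :=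
        mul_le_mul_of_nonneg_left ihk (by positivity)
      have f2 : η * L * ((10/9) * η * (k:ℝ) * (σ + ‖gradFm m w‖))
          ≤ (1/10) * ((10/9) * η * (σ + ‖gradFm m w‖)) := by
        have := mul_le_mul_of_nonneg_right hkK (by positivity : (0:ℝ) ≤ (10/9) * η * (σ + ‖gradFm m w‖))
        nlinarith [this]
      have f3 : η * ‖gradf m (wl m k) (xs m k)‖
          ≤ η * (L * ‖wl m k - w‖ + (σ + ‖gradFm m w‖)) :=
        mul_le_mul_of_nonneg_left h2 hη.le
      push_cast
      linarith [h1, f1, f2, f3, ihk]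
  -- abbreviations
  set g : EuclideanSpace ℝ (Fin d) := gradF w with hg
  set T : EuclideanSpace ℝ (Fin d) :=
    ∑ m : Fin M, ∑ k ∈ Finset.range K, gradf m (wl m k) (xs m k) with hT
  set S : EuclideanSpace ℝ (Fin d) :=
    ∑ m : Fin M, ∑ k ∈ Finset.range K, gradf m w (xs m k) with hS
  set Δ : EuclideanSpace ℝ (Fin d) := (1/((M:ℝ)*K)) • S - g with hΔ
  set D : EuclideanSpace ℝ (Fin d) := (1/((M:ℝ)*K)) • (T - S) with hD
  set wp : EuclideanSpace ℝ (Fin d) := (1 / (M : ℝ)) • ∑ m : Fin M, wl m K with hwp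
  -- decomposition : g + Δ + D = (1/(MK)) • T
  have hgud : g + Δ + D = (1/((M:ℝ)*K)) • T := by
    rw [hΔ, hD]; module
  -- closed form of iterates
  have hclosed : ∀ m : Fin M, wl m K
      = w - η • ∑ k ∈ Finset.range K, gradf m (wl m k) (xs m k) := by
    intro m
    have : ∀ j, j ≤ K → wl m j = w - η • ∑ k ∈ Finset.range j, gradf m (wl m k) (xs m k) := by
      intro j
      induction j with
      | zero => intro _; simp [hwl0]
      | succ j ih =>
        intro hj1
        have ihj := ih (Nat.le_of_succ_le hj1)
        rw [hwlrec m j hj1, Finset.sum_range_succ, smul_add]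
        nth_rewrite 1 [ihj]
        abel
    exact this K le_rfl
  -- w⁺ − w
  have hsum : wp - w = (-(η*(K:ℝ))) • ((1/((M:ℝ)*K)) • T) := by
    have h1 : ∑ m : Fin M, wl m K = (M:ℝ) • w - η • T := by
      simp_rw [hclosed]
      rw [Finset.sum_sub_distrib, Finset.sum_const, Finset.card_univ, Fintype.card_fin,
        ← Finset.smul_sum, ← hT, ← Nat.cast_smul_eq_nsmul ℝ]
    rw [hwp, h1]
    match_scalars <;> field_simp <;> ring
  have hdiff : wp - w = (-(η*(K:ℝ))) • (g + Δ + D) := by rw [hgud, hsum]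
  -- smoothness applied
  have hsm := hsmooth w wp
  have hip : ⟪g, wp - w⟫ = -((η*(K:ℝ)) * ⟪g, g + Δ + D⟫) := by
    rw [hdiff, real_inner_smul_right]; ring
  have hnrm : ‖wp - w‖^2 = (η*(K:ℝ))^2 * ‖g + Δ + D‖^2 := by
    rw [hdiff, norm_smul, Real.norm_eq_abs, abs_neg, abs_of_pos ht, mul_pow]
  have hIP : ⟪g, g + Δ + D⟫ = ‖g‖^2 + ⟪g, Δ⟫ + ⟪g, D⟫ := by
    rw [inner_add_right, inner_add_right, real_inner_self_eq_norm_sq]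
  -- bound on per-client drift sums
  have hsumk : ∀ m : Fin M,
      ∑ k ∈ Finset.range K, ‖gradf m (wl m k) (xs m k) - gradf m w (xs m k)‖
        ≤ (5/9) * L * η * (K:ℝ)^2 * (σ + ‖gradFm m w‖) := by
    intro m
    have hGnn : (0:ℝ) ≤ σ + ‖gradFm m w‖ := add_nonneg hσ (norm_nonneg _)
    have step : ∀ k ∈ Finset.range K,
        ‖gradf m (wl m k) (xs m k) - gradf m w (xs m k)‖
          ≤ (L * ((10/9) * η * (σ + ‖gradFm m w‖))) * (k:ℝ) := by
      intro k hkm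
      have hk : k < K := Finset.mem_range.mp hkm
      have := (hflip m (xs m k) (wl m k) w).trans
        (mul_le_mul_of_nonneg_left (hiter m k hk.le) hL.le)
      nlinarith [this]
    calc ∑ k ∈ Finset.range K, ‖gradf m (wl m k) (xs m k) - gradf m w (xs m k)‖
        ≤ ∑ k ∈ Finset.range K, (L * ((10/9) * η * (σ + ‖gradFm m w‖))) * (k:ℝ) :=
          Finset.sum_le_sum step
      _ = (L * ((10/9) * η * (σ + ‖gradFm m w‖))) * ((K:ℝ)*((K:ℝ)-1)/2) := by
          rw [← Finset.mul_sum, aux_gauss]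
      _ ≤ (5/9) * L * η * (K:ℝ)^2 * (σ + ‖gradFm m w‖) := by
          nlinarith [mul_nonneg (mul_nonneg hL.le hη.le) hGnn, hK']
  -- bound on D
  have hTSsum : T - S = ∑ m : Fin M, ∑ k ∈ Finset.range K,
      (gradf m (wl m k) (xs m k) - gradf m w (xs m k)) := by
    rw [hT, hS, ← Finset.sum_sub_distrib]
    exact Finset.sum_congr rfl fun m _ => by rw [← Finset.sum_sub_distrib]
  have hDb : ‖D‖ ≤ (5/9) * (L*(η*(K:ℝ))) * ((1/(M:ℝ)) * ∑ m : Fin M, (σ + ‖gradFm m w‖)) := by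
    rw [hD, norm_smul, Real.norm_eq_abs, abs_of_pos (by positivity : (0:ℝ) < 1/((M:ℝ)*K))]
    have h1 : ‖T - S‖ ≤ ∑ m : Fin M, (5/9) * L * η * (K:ℝ)^2 * (σ + ‖gradFm m w‖) := by
      rw [hTSsum]
      refine (norm_sum_le _ _).trans (Finset.sum_le_sum fun m _ => ?_)
      exact (norm_sum_le _ _).trans (hsumk m)
    have h2 : (1/((M:ℝ)*K)) * ‖T - S‖
        ≤ (1/((M:ℝ)*K)) * ∑ m : Fin M, (5/9) * L * η * (K:ℝ)^2 * (σ + ‖gradFm m w‖) :=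
      mul_le_mul_of_nonneg_left h1 (by positivity)
    refine h2.trans (le_of_eq ?_)
    rw [← Finset.mul_sum]
    field_simp
  -- average dissimilarity bound
  have hAvg : ((1/(M:ℝ)) * ∑ m : Fin M, (σ + ‖gradFm m w‖))^2
      ≤ 2*(σ^2+θ^2) + 2*δ^2*‖g‖^2 := by
    have cs : (∑ m : Fin M, (σ + ‖gradFm m w‖))^2
        ≤ (M:ℝ) * ∑ m : Fin M, (σ + ‖gradFm m w‖)^2 := by
      have := Finset.sum_mul_sq_le_sq_mul_sq Finset.univ (fun _ : Fin M => (1:ℝ))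
        (fun m => σ + ‖gradFm m w‖)
      simpa using this
    have s1 : ∑ m : Fin M, (σ + ‖gradFm m w‖)^2
        ≤ (M:ℝ) * (2*σ^2) + 2 * ∑ m : Fin M, ‖gradFm m w‖^2 := by
      have : ∀ m ∈ Finset.univ, (σ + ‖gradFm m w‖)^2 ≤ 2*σ^2 + 2*‖gradFm m w‖^2 :=
        fun m _ => by nlinarith [sq_nonneg (σ - ‖gradFm m w‖)]
      calc ∑ m : Fin M, (σ + ‖gradFm m w‖)^2
          ≤ ∑ m : Fin M, (2*σ^2 + 2*‖gradFm m w‖^2) := Finset.sum_le_sum this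
        _ = (M:ℝ) * (2*σ^2) + 2 * ∑ m : Fin M, ‖gradFm m w‖^2 := by
            rw [Finset.sum_add_distrib, Finset.sum_const, Finset.card_univ, Fintype.card_fin,
              ← Finset.mul_sum, nsmul_eq_mul]
    have hb : ∑ m : Fin M, ‖gradFm m w‖^2 ≤ (M:ℝ) * (θ^2 + δ^2*‖g‖^2) := by
      have h' := mul_le_mul_of_nonneg_left (hbgd w) hM'.le
      rw [← hg] at h'
      calc ∑ m : Fin M, ‖gradFm m w‖^2
          = (M:ℝ) * (1/(M:ℝ) * ∑ m : Fin M, ‖gradFm m w‖^2) := by field_simp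
        _ ≤ (M:ℝ) * (θ^2 + δ^2*‖g‖^2) := h'
    have hA2 : ((1/(M:ℝ)) * ∑ m : Fin M, (σ + ‖gradFm m w‖))^2
        = (∑ m : Fin M, (σ + ‖gradFm m w‖))^2 / (M:ℝ)^2 := by field_simp
    rw [hA2]
    rw [div_le_iff₀ (by positivity)]
    have t1 := mul_le_mul_of_nonneg_left s1 hM'.le
    have t2 := mul_le_mul_of_nonneg_left hb (by positivity : (0:ℝ) ≤ 2*(M:ℝ))
    nlinarith [cs, t1, t2]
  have hD2 : ‖D‖^2 ≤ 50/81 * (L*(η*(K:ℝ)))^2 * (σ^2+θ^2)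
      + 50/81 * ((L*(η*(K:ℝ)))^2 * δ^2 * ‖g‖^2) := by
    have h0 : ‖D‖^2 ≤ ((5/9) * (L*(η*(K:ℝ))) * ((1/(M:ℝ)) * ∑ m : Fin M, (σ + ‖gradFm m w‖)))^2 := by
      have := pow_le_pow_left₀ (norm_nonneg D) hDb 2
      exact this
    refine h0.trans ?_
    have expand : ((5/9) * (L*(η*(K:ℝ))) * ((1/(M:ℝ)) * ∑ m : Fin M, (σ + ‖gradFm m w‖)))^2
        = (25/81) * (L*(η*(K:ℝ)))^2 * ((1/(M:ℝ)) * ∑ m : Fin M, (σ + ‖gradFm m w‖))^2 := by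
      ring
    rw [expand]
    have t3 := mul_le_mul_of_nonneg_left hAvg
      (by positivity : (0:ℝ) ≤ (25/81) * (L*(η*(K:ℝ)))^2)
    linarith [t3]
  -- scalar endgame
  have hy1 := aux_young g Δ (10/17) (by norm_num)
  have hy2 := aux_young g D (1/12) (by norm_num)
  have hq := aux_three g Δ D
  have hA : (0:ℝ) ≤ ‖g‖^2 := sq_nonneg _
  have hB : (0:ℝ) ≤ ‖Δ‖^2 := sq_nonneg _
  have hC : (0:ℝ) ≤ ‖D‖^2 := sq_nonneg _
  have hs : (0:ℝ) ≤ σ^2 + θ^2 := by positivity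
  have m1 : (L*(η*(K:ℝ)))/2 * ‖g+Δ+D‖^2 ≤ 3/20*(‖g‖^2 + ‖Δ‖^2 + ‖D‖^2) := by
    have h1 : (L*(η*(K:ℝ)))/2 * ‖g+Δ+D‖^2
        ≤ (L*(η*(K:ℝ)))/2 * (3*‖g‖^2 + 3*‖Δ‖^2 + 3*‖D‖^2) :=
      mul_le_mul_of_nonneg_left hq (by positivity)
    have h2 : (L*(η*(K:ℝ)))/2 * (3*‖g‖^2 + 3*‖Δ‖^2 + 3*‖D‖^2)
        ≤ (1/10)/2 * (3*‖g‖^2 + 3*‖Δ‖^2 + 3*‖D‖^2) :=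
      mul_le_mul_of_nonneg_right (by linarith) (by linarith [hA, hB, hC])
    linarith [h1, h2]
  have m3 : (L*(η*(K:ℝ)))^2 * δ^2 * ‖g‖^2 ≤ 1/100 * ‖g‖^2 := by
    have p3 := mul_le_mul he2 he1 hetpos.le (by norm_num)
    have p4 : (L*(η*(K:ℝ)))^2 * δ^2 ≤ 1/100 := by nlinarith [p3]
    nlinarith [mul_le_mul_of_nonneg_right p4 hA]
  obtain ⟨Y, hY⟩ : ∃ Y : ℝ, Y = (L*(η*(K:ℝ))) * (σ^2+θ^2) / δ^2 := ⟨_, rfl⟩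
  have m4 : (L*(η*(K:ℝ)))^2 * (σ^2+θ^2) ≤ 1/10 * Y := by
    rw [hY, show (1:ℝ)/10 * ((L*(η*(K:ℝ))) * (σ^2+θ^2) / δ^2)
      = (1/10 * ((L*(η*(K:ℝ))) * (σ^2+θ^2)))/δ^2 by ring, le_div_iff₀ hδ2]
    have t4 := mul_le_mul_of_nonneg_right he2 (mul_nonneg hetpos.le hs)
    nlinarith [t4]
  have hesd : (0:ℝ) ≤ Y := by rw [hY]; positivity
  -- key scalar inequality
  have key : -(‖g‖^2 + ⟪g, Δ⟫ + ⟪g, D⟫) + (L*(η*(K:ℝ)))/2 * ‖g+Δ+D‖^2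
      ≤ -(45/98) * ‖g‖^2 + ‖Δ‖^2 + (40/98) * Y := by
    linarith [hy1, hy2, m1, hD2, m3, m4, hesd, hA, hB, hC]
  -- assemble
  have hkey : F wp ≤ F w - (45/98) * (η*(K:ℝ)) * ‖g‖^2 + (η*(K:ℝ)) * ‖Δ‖^2
      + (40/98) * L * (η*(K:ℝ))^2 * (θ^2+σ^2) / δ^2 := by
    have e1 : F wp ≤ F w + (η*(K:ℝ)) * (-(‖g‖^2 + ⟪g, Δ⟫ + ⟪g, D⟫)
        + (L*(η*(K:ℝ)))/2 * ‖g+Δ+D‖^2) := by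
      have : ⟪g, wp - w⟫ + L/2 * ‖wp - w‖^2
          = (η*(K:ℝ)) * (-(‖g‖^2 + ⟪g, Δ⟫ + ⟪g, D⟫) + (L*(η*(K:ℝ)))/2 * ‖g+Δ+D‖^2) := by
        rw [hip, hnrm, hIP]; ring
      linarith [hsm, this.ge, this.le]
    have e2 : (η*(K:ℝ)) * (-(‖g‖^2 + ⟪g, Δ⟫ + ⟪g, D⟫) + (L*(η*(K:ℝ)))/2 * ‖g+Δ+D‖^2)
        ≤ (η*(K:ℝ)) * (-(45/98) * ‖g‖^2 + ‖Δ‖^2 + (40/98) * Y) :=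
      mul_le_mul_of_nonneg_left key ht.le
    have e3 : (η*(K:ℝ)) * (-(45/98) * ‖g‖^2 + ‖Δ‖^2 + (40/98) * Y)
        = -(45/98) * (η*(K:ℝ)) * ‖g‖^2 + (η*(K:ℝ)) * ‖Δ‖^2
          + (40/98) * L * (η*(K:ℝ))^2 * (θ^2+σ^2) / δ^2 := by
      rw [hY]
      field_simp
      ring
    linarith [e1, e2, e3.le, e3.ge]
  linarith [hkey]
end

section
/- Deterministic per-path version of the Local SGD convergence bound: under the setting of the Local SGD per-round descent—M, K positive integers, η > 0, η̃ = ηK ≤ 1/(10Lδ²), each f_m(·; x) differentiable with L-Lipschitz gradient, each F_m differentiable with ‖∇f_m(u; x) − ∇F_m(u)‖ ≤ σ for all u, x, F = (1/M)Σ_m F_m L-smooth and bounded below by F*, and (1/M)Σ_m ‖∇F_m(u)‖² ≤ θ² + δ²‖∇F(u)‖² for all u with θ ≥ 0, δ ≥ 1—run T ≥ 1 rounds: in round t, starting from w_t, each client m computes w_t^{(m,0)} = w_t, w_t^{(m,k+1)} = w_t^{(m,k)} − η ∇f_m(w_t^{(m,k)}; x_t^{(m,k)}) for k = 0,…,K−1,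 and the server sets w_{t+1} = (1/M) Σ_m w_t^{(m,K)}. Let ḡ_t = (1/(MK)) Σ_{m,k} ∇f_m(w_t; x_t^{(m,k)}). Then (1/T) Σ_{t=0}^{T−1} ‖∇F(w_t)‖² ≤ (98/45) (F(w₀) − F*)/(η̃ T) + (98/45) (1/T) Σ_{t=0}^{T−1} ‖ḡ_t − ∇F(w_t)‖² + (40/45) L η̃ (θ² + σ²)/δ². -/
open scoped RealInnerProductSpace

set_option maxHeartbeats 4000000 in
lemma localSGD_round
    {d M K : ℕ} (hM : 0 < M) (hK : 0 < K)
    (η L σ θ δ : ℝ) (hη : 0 < η) (hσ : 0 ≤ σ) (hδ : 1 ≤ δ) (hL : 0 < L)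
    (hstep : η * K ≤ 1 / (10 * L * δ ^ 2))
    (X : Fin M → Type*)
    (gradf : ∀ m, EuclideanSpace ℝ (Fin d) → X m → EuclideanSpace ℝ (Fin d))
    (hflip : ∀ m x u v, ‖gradf m u x - gradf m v x‖ ≤ L * ‖u - v‖)
    (gradFm : Fin M → EuclideanSpace ℝ (Fin d) → EuclideanSpace ℝ (Fin d))
    (hnoise : ∀ m u x, ‖gradf m u x - gradFm m u‖ ≤ σ)
    (F : EuclideanSpace ℝ (Fin d) → ℝ)
    (gradF : EuclideanSpace ℝ (Fin d) → EuclideanSpace ℝ (Fin d))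
    (x : ∀ m : Fin M, ℕ → X m)
    (w0 w1 : EuclideanSpace ℝ (Fin d))
    (hsmooth : F w1 ≤ F w0 + ⟪gradF w0, w1 - w0⟫ + L / 2 * ‖w1 - w0‖ ^ 2)
    (hbgd : (1 / (M : ℝ)) * ∑ m : Fin M, ‖gradFm m w0‖ ^ 2 ≤
      θ ^ 2 + δ ^ 2 * ‖gradF w0‖ ^ 2)
    (wl : Fin M → ℕ → EuclideanSpace ℝ (Fin d))
    (hwl0 : ∀ m, wl m 0 = w0)
    (hwlrec : ∀ m, ∀ k < K, wl m (k + 1) = wl m k - η • gradf m (wl m k) (x m k))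
    (hagg : w1 = (1 / (M : ℝ)) • ∑ m : Fin M, wl m K) :
    (151/324 : ℝ) * (η * K) * ‖gradF w0‖ ^ 2 ≤
      F w0 - F w1 +
      (11/20 : ℝ) * (η * K) *
        ‖(1 / ((M : ℝ) * K)) •
            (∑ m : Fin M, ∑ k ∈ Finset.range K, gradf m w0 (x m k)) - gradF w0‖ ^ 2 +
      (55/162 : ℝ) * L * (η * K) ^ 2 * (θ ^ 2 + σ ^ 2) / δ ^ 2 := by
  have hδ2 : (1:ℝ) ≤ δ ^ 2 := by nlinarith only [hδ]
  have hδ2pos : (0:ℝ) < δ ^ 2 := by linarith only [hδ2]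
  have hKR : (0:ℝ) < (K:ℝ) := by exact_mod_cast hK
  have hMR : (0:ℝ) < (M:ℝ) := by exact_mod_cast hM
  obtain ⟨η', hη'def⟩ : ∃ x : ℝ, x = η * (K:ℝ) := ⟨_, rfl⟩
  rw [← hη'def] at hstep ⊢
  have hη'pos : 0 < η' := by rw [hη'def]; positivity
  have hs10' : L * η' * δ ^ 2 ≤ 1/10 := by
    have h10 : (0:ℝ) < 10 * L * δ ^ 2 := by positivity
    rw [le_div_iff₀ h10] at hstep
    nlinarith only [hstep]
  have hs10 : L * η' ≤ 1/10 := by nlinarith only [hs10', hδ2, mul_pos hL hη'pos]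
  have hs0 : 0 ≤ L * η' := by positivity
  -- notation
  obtain ⟨A, hAdef⟩ : ∃ A' : Fin M → ℝ, A' = fun m => ‖gradFm m w0‖ + σ := ⟨_, rfl⟩
  have hA0 : ∀ m, 0 ≤ A m := by
    intro m; simp only [hAdef]; exact add_nonneg (norm_nonneg _) hσ
  -- gradient norm bound
  have hgnorm : ∀ m u xx, ‖gradf m u xx‖ ≤ A m + L * ‖u - w0‖ := by
    intro m u xx
    have h1 : ‖gradf m u xx - gradf m w0 xx‖ ≤ L * ‖u - w0‖ := hflip m xx u w0
    have h2 : ‖gradf m w0 xx - gradFm m w0‖ ≤ σ := hnoise m w0 xx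
    calc ‖gradf m u xx‖
        = ‖(gradf m u xx - gradf m w0 xx) + (gradf m w0 xx - gradFm m w0) + gradFm m w0‖ := by
          congr 1; abel
      _ ≤ ‖gradf m u xx - gradf m w0 xx‖ + ‖gradf m w0 xx - gradFm m w0‖ + ‖gradFm m w0‖ :=
          norm_add₃_le
      _ ≤ A m + L * ‖u - w0‖ := by simp only [hAdef]; linarith only [h1, h2]
  -- drift bound
  have hD : ∀ m, ∀ k, k ≤ K → ‖wl m k - w0‖ ≤ (10/9) * η * k * A m := by
    intro m k
    induction k with
    | zero => intro _; simp [hwl0 m]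
    | succ k ih =>
      intro hk1
      have hkK : k < K := hk1
      have ihk : ‖wl m k - w0‖ ≤ (10/9) * η * k * A m := ih (le_of_lt hkK)
      have hrec := hwlrec m k hkK
      have hstep1 : ‖wl m (k+1) - w0‖ ≤ ‖wl m k - w0‖ + η * ‖gradf m (wl m k) (x m k)‖ := by
        rw [hrec]
        calc ‖wl m k - η • gradf m (wl m k) (x m k) - w0‖
            = ‖(wl m k - w0) - η • gradf m (wl m k) (x m k)‖ := by congr 1; abel
          _ ≤ ‖wl m k - w0‖ + ‖η • gradf m (wl m k) (x m k)‖ := norm_sub_le _ _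
          _ = ‖wl m k - w0‖ + η * ‖gradf m (wl m k) (x m k)‖ := by
              rw [norm_smul, Real.norm_eq_abs, abs_of_pos hη]
      have hgb := hgnorm m (wl m k) (x m k)
      have hkcast : (k:ℝ) + 1 ≤ (K:ℝ) := by exact_mod_cast hkK
      have hkk : L * η * (k:ℝ) ≤ 1/10 := by
        have : L * η * (k:ℝ) ≤ L * η * (K:ℝ) := by
          apply mul_le_mul_of_nonneg_left (by linarith only [hkcast]) (by positivity)
        have h2 : L * η * (K:ℝ) = L * η' := by rw [hη'def]; ring
        linarith only [hs10, h2 ▸ this]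
      have hAm := hA0 m
      have e1 : η * ‖gradf m (wl m k) (x m k)‖ ≤ η * (A m + L * ‖wl m k - w0‖) :=
        mul_le_mul_of_nonneg_left hgb hη.le
      have e2 : η * L * ‖wl m k - w0‖ ≤ η * L * ((10/9) * η * (k:ℝ) * A m) :=
        mul_le_mul_of_nonneg_left ihk (by positivity)
      have e3 : η * L * ((10/9) * η * (k:ℝ) * A m) ≤ (1/9) * (η * A m) := by
        calc η * L * ((10/9) * η * (k:ℝ) * A m)
            = (L * η * (k:ℝ)) * ((10/9) * (η * A m)) := by ring
          _ ≤ (1/10) * ((10/9) * (η * A m)) :=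
              mul_le_mul_of_nonneg_right hkk (by positivity)
          _ = (1/9) * (η * A m) := by ring
      push_cast
      calc ‖wl m (k+1) - w0‖
          ≤ ‖wl m k - w0‖ + η * ‖gradf m (wl m k) (x m k)‖ := hstep1
        _ ≤ ‖wl m k - w0‖ + (η * A m + η * L * ‖wl m k - w0‖) := by
            have : η * (A m + L * ‖wl m k - w0‖) = η * A m + η * L * ‖wl m k - w0‖ := by ring
            linarith only [e1]
        _ ≤ 10/9 * η * (k:ℝ) * A m + (η * A m + 1/9 * (η * A m)) := by linarith only [ihk, e2, e3]
        _ = 10/9 * η * ((k:ℝ) + 1) * A m := by ring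
  -- update formula
  obtain ⟨S, hSdef⟩ : ∃ v : EuclideanSpace ℝ (Fin d),
    v = ∑ m : Fin M, ∑ k ∈ Finset.range K, gradf m (wl m k) (x m k) := ⟨_, rfl⟩
  obtain ⟨Sb, hSbdef⟩ : ∃ v : EuclideanSpace ℝ (Fin d),
    v = ∑ m : Fin M, ∑ k ∈ Finset.range K, gradf m w0 (x m k) := ⟨_, rfl⟩
  obtain ⟨g, hgdef⟩ : ∃ v : EuclideanSpace ℝ (Fin d),
    v = (1 / ((M:ℝ) * K)) • S := ⟨_, rfl⟩
  obtain ⟨gb, hgbdef⟩ : ∃ v : EuclideanSpace ℝ (Fin d),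
    v = (1 / ((M:ℝ) * K)) • Sb := ⟨_, rfl⟩
  rw [← hSbdef, ← hgbdef]
  have hwlK : ∀ m, ∀ n, n ≤ K →
      wl m n = w0 - η • ∑ k ∈ Finset.range n, gradf m (wl m k) (x m k) := by
    intro m n
    induction n with
    | zero => intro _; simp [hwl0 m]
    | succ n ih =>
      intro hn1
      have hnK : n < K := hn1
      rw [Finset.sum_range_succ, smul_add, ← sub_sub, ← ih (le_of_lt hnK),
        ← hwlrec m n hnK]
  have hw1 : w1 = w0 - η' • g := by
    have hsum : (∑ m : Fin M, wl m K) = (M:ℝ) • w0 - η • S := by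
      calc ∑ m : Fin M, wl m K
          = ∑ m : Fin M, (w0 - η • ∑ k ∈ Finset.range K, gradf m (wl m k) (x m k)) :=
            Finset.sum_congr rfl (fun m _ => hwlK m K le_rfl)
        _ = (∑ _m : Fin M, w0) -
            ∑ m : Fin M, η • ∑ k ∈ Finset.range K, gradf m (wl m k) (x m k) :=
            Finset.sum_sub_distrib _ _
        _ = (M:ℝ) • w0 - η • S := by
            rw [hSdef, Finset.sum_const, Finset.card_univ, Fintype.card_fin,
              ← Nat.cast_smul_eq_nsmul ℝ, ← Finset.smul_sum]
    rw [hagg, hsum, smul_sub, smul_smul, smul_smul, hgdef, smul_smul]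
    have h1 : 1 / (M:ℝ) * (M:ℝ) = 1 := by field_simp
    have h2 : 1 / (M:ℝ) * η = η' * (1 / ((M:ℝ) * K)) := by
      rw [hη'def]; field_simp
    rw [h1, h2, one_smul]
  -- gap bound
  have hgauss : (∑ k ∈ Finset.range K, (k:ℝ)) * 2 ≤ (K:ℝ) * K := by
    have h2 : (∑ k ∈ Finset.range K, k) * 2 ≤ K * K := by
      rw [Finset.sum_range_id_mul_two]
      exact Nat.mul_le_mul_left _ (Nat.sub_le _ _)
    calc (∑ k ∈ Finset.range K, (k:ℝ)) * 2 = ((∑ k ∈ Finset.range K, k : ℕ) : ℝ) * 2 := by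
          push_cast; ring
      _ ≤ ((K * K : ℕ) : ℝ) := by exact_mod_cast h2
      _ = (K:ℝ) * K := by push_cast; ring
  have hper : ∀ m, ∑ k ∈ Finset.range K, ‖gradf m (wl m k) (x m k) - gradf m w0 (x m k)‖
      ≤ (5/9) * L * η * (K:ℝ)^2 * A m := by
    intro m
    calc ∑ k ∈ Finset.range K, ‖gradf m (wl m k) (x m k) - gradf m w0 (x m k)‖
        ≤ ∑ k ∈ Finset.range K, L * (10/9 * η * (k:ℝ) * A m) :=
          Finset.sum_le_sum (fun k hk => le_trans (hflip m (x m k) (wl m k) w0)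
            (mul_le_mul_of_nonneg_left
              (hD m k (le_of_lt (Finset.mem_range.mp hk))) hL.le))
      _ = (L * (10/9) * η * A m) * ∑ k ∈ Finset.range K, (k:ℝ) := by
          rw [Finset.mul_sum]; exact Finset.sum_congr rfl (fun k _ => by ring)
      _ ≤ (L * (10/9) * η * A m) * ((K:ℝ)^2 / 2) := by
          apply mul_le_mul_of_nonneg_left _
            (mul_nonneg (by positivity) (hA0 m))
          nlinarith only [hgauss]
      _ = (5/9) * L * η * (K:ℝ)^2 * A m := by ring
  have hSgap : ‖S - Sb‖ ≤ (5/9) * L * η * (K:ℝ)^2 * ∑ m : Fin M, A m := by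
    rw [hSdef, hSbdef, ← Finset.sum_sub_distrib]
    calc ‖∑ m : Fin M, (∑ k ∈ Finset.range K, gradf m (wl m k) (x m k) -
            ∑ k ∈ Finset.range K, gradf m w0 (x m k))‖
        ≤ ∑ m : Fin M, ‖∑ k ∈ Finset.range K, gradf m (wl m k) (x m k) -
            ∑ k ∈ Finset.range K, gradf m w0 (x m k)‖ := norm_sum_le _ _
      _ ≤ ∑ m : Fin M, (5/9) * L * η * (K:ℝ)^2 * A m :=
          Finset.sum_le_sum (fun m _ => by
            rw [← Finset.sum_sub_distrib]
            exact le_trans (norm_sum_le _ _) (hper m))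
      _ = (5/9) * L * η * (K:ℝ)^2 * ∑ m : Fin M, A m := by rw [← Finset.mul_sum]
  obtain ⟨Ab, hAbdef⟩ : ∃ r : ℝ, r = (1/(M:ℝ)) * ∑ m : Fin M, A m := ⟨_, rfl⟩
  have hAb0 : 0 ≤ Ab := by
    rw [hAbdef]
    exact mul_nonneg (by positivity) (Finset.sum_nonneg (fun m _ => hA0 m))
  have hgap : ‖g - gb‖ ≤ (5/9) * (L * η') * Ab := by
    rw [hgdef, hgbdef, ← smul_sub, norm_smul, Real.norm_eq_abs,
      abs_of_pos (by positivity : (0:ℝ) < 1/((M:ℝ)*K))]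
    calc (1/((M:ℝ)*K)) * ‖S - Sb‖
        ≤ (1/((M:ℝ)*K)) * ((5/9) * L * η * (K:ℝ)^2 * ∑ m : Fin M, A m) :=
          mul_le_mul_of_nonneg_left hSgap (by positivity)
      _ = (5/9) * (L * η') * Ab := by
          rw [hη'def, hAbdef]; field_simp
  -- second-moment bound on Ab
  have hG2 : (0:ℝ) ≤ ‖gradF w0‖^2 := by positivity
  obtain ⟨Nv, hNvdef⟩ : ∃ r : ℝ, r = (θ^2 + σ^2)/δ^2 := ⟨_, rfl⟩
  have hNv0 : 0 ≤ Nv := by rw [hNvdef]; positivity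
  have hNv : Nv * δ^2 = θ^2 + σ^2 := by rw [hNvdef]; field_simp
  have hCS : (∑ m : Fin M, A m)^2 ≤ (M:ℝ) * ∑ m : Fin M, (A m)^2 := by
    have h := Finset.sum_mul_sq_le_sq_mul_sq Finset.univ (fun _ : Fin M => (1:ℝ)) A
    simpa [Finset.card_univ] using h
  have hsumA2 : ∑ m : Fin M, (A m)^2 ≤
      2 * (∑ m : Fin M, ‖gradFm m w0‖^2) + (M:ℝ) * (2*σ^2) := by
    calc ∑ m : Fin M, (A m)^2
        ≤ ∑ m : Fin M, (2*‖gradFm m w0‖^2 + 2*σ^2) :=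
          Finset.sum_le_sum (fun m _ => by
            have hAm : A m = ‖gradFm m w0‖ + σ := by rw [hAdef]
            rw [hAm]
            nlinarith only [sq_nonneg (‖gradFm m w0‖ - σ)])
      _ = 2 * (∑ m : Fin M, ‖gradFm m w0‖^2) + (M:ℝ) * (2*σ^2) := by
          rw [Finset.sum_add_distrib, ← Finset.mul_sum, Finset.sum_const,
            Finset.card_univ, Fintype.card_fin, nsmul_eq_mul]
  have hAb2 : Ab^2 ≤ 2*δ^2*(Nv + ‖gradF w0‖^2) := by
    have hM1 : (1/(M:ℝ))^2 * ((M:ℝ) * ∑ m : Fin M, (A m)^2)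
        = (1/(M:ℝ)) * ∑ m : Fin M, (A m)^2 := by field_simp
    calc Ab^2 = (1/(M:ℝ))^2 * (∑ m : Fin M, A m)^2 := by rw [hAbdef]; ring
      _ ≤ (1/(M:ℝ))^2 * ((M:ℝ) * ∑ m : Fin M, (A m)^2) :=
          mul_le_mul_of_nonneg_left hCS (by positivity)
      _ = (1/(M:ℝ)) * ∑ m : Fin M, (A m)^2 := hM1
      _ ≤ (1/(M:ℝ)) * (2 * (∑ m : Fin M, ‖gradFm m w0‖^2) + (M:ℝ) * (2*σ^2)) :=
          mul_le_mul_of_nonneg_left hsumA2 (by positivity)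
      _ = 2 * ((1/(M:ℝ)) * ∑ m : Fin M, ‖gradFm m w0‖^2) + 2*σ^2 := by
          field_simp
      _ ≤ 2 * (θ^2 + δ^2 * ‖gradF w0‖^2) + 2*σ^2 := by linarith only [hbgd]
      _ = 2*δ^2*(Nv + ‖gradF w0‖^2) := by
          rw [hNvdef]; field_simp; ring
  -- bound on ‖g - gb‖²
  have he2 : ‖g - gb‖^2 ≤ (5/81) * (L*η') * (Nv + ‖gradF w0‖^2) := by
    have h2 : (L*η')^2 * δ^2 ≤ (L*η')/10 := by nlinarith only [hs10', hs0]
    calc ‖g - gb‖^2 ≤ ((5/9) * (L*η') * Ab)^2 :=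
          pow_le_pow_left₀ (norm_nonneg _) hgap 2
      _ = (25/81) * (L*η')^2 * Ab^2 := by ring
      _ ≤ (25/81) * (L*η')^2 * (2*δ^2*(Nv + ‖gradF w0‖^2)) :=
          mul_le_mul_of_nonneg_left hAb2 (by positivity)
      _ = ((L*η')^2 * δ^2) * ((50/81) * (Nv + ‖gradF w0‖^2)) := by ring
      _ ≤ ((L*η')/10) * ((50/81) * (Nv + ‖gradF w0‖^2)) :=
          mul_le_mul_of_nonneg_right h2
            (by nlinarith only [hNv0, hG2])
      _ = (5/81) * (L*η') * (Nv + ‖gradF w0‖^2) := by ring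
  -- smoothness step
  have hgoal_eq : (55/162:ℝ) * L * η'^2 * (θ^2 + σ^2) / δ^2
      = 55/162 * L * η'^2 * Nv := by rw [hNvdef]; ring
  have hupd : w1 - w0 = -(η' • g) := by rw [hw1]; abel
  have hnrm : ‖w1 - w0‖^2 = η'^2 * ‖g‖^2 := by
    rw [hupd, norm_neg, norm_smul, Real.norm_eq_abs, abs_of_pos hη'pos]
    ring
  have hinner2 : 2 * ⟪gradF w0, g⟫ = ‖gradF w0‖^2 + ‖g‖^2 - ‖g - gradF w0‖^2 := by
    have h := norm_sub_sq_real g (gradF w0)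
    have hc : ⟪g, gradF w0⟫ = ⟪gradF w0, g⟫ := real_inner_comm (gradF w0) g
    linarith only [h, hc]
  have hipval : ⟪gradF w0, w1 - w0⟫
      = -(η'/2) * (‖gradF w0‖^2 + ‖g‖^2 - ‖g - gradF w0‖^2) := by
    rw [hupd, inner_neg_right, real_inner_smul_right]
    linear_combination (-(η'/2)) * hinner2
  have hdrop : 0 ≤ (η'/2) * (1 - L*η') * ‖g‖^2 :=
    mul_nonneg (mul_nonneg (by positivity) (by linarith only [hs10, mul_pos hL hη'pos])) (by positivity)
  have hsm2 : F w1 ≤ F w0 - (η'/2) * ‖gradF w0‖^2 + (η'/2) * ‖g - gradF w0‖^2 := by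
    calc F w1 ≤ F w0 + ⟪gradF w0, w1 - w0⟫ + L/2 * ‖w1 - w0‖^2 := hsmooth
      _ = F w0 - (η'/2) * (‖gradF w0‖^2 + ‖g‖^2 - ‖g - gradF w0‖^2)
          + L/2 * (η'^2 * ‖g‖^2) := by rw [hipval, hnrm]; ring
      _ ≤ F w0 - (η'/2) * ‖gradF w0‖^2 + (η'/2) * ‖g - gradF w0‖^2 := by
          linarith only [hdrop]
  -- triangle + final assembly
  have htri : ‖g - gradF w0‖ ≤ ‖g - gb‖ + ‖gb - gradF w0‖ := by
    calc ‖g - gradF w0‖ = ‖(g - gb) + (gb - gradF w0)‖ := by congr 1; abel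
      _ ≤ ‖g - gb‖ + ‖gb - gradF w0‖ := norm_add_le _ _
  have hnd2 : ‖g - gradF w0‖^2 ≤ 11 * ‖g - gb‖^2 + (11/10) * ‖gb - gradF w0‖^2 := by
    have h1 : ‖g - gradF w0‖^2 ≤ (‖g - gb‖ + ‖gb - gradF w0‖)^2 :=
      pow_le_pow_left₀ (norm_nonneg _) htri 2
    nlinarith only [sq_nonneg (10 * ‖g - gb‖ - ‖gb - gradF w0‖), h1]
  rw [hgoal_eq]
  have p1 : (η'/2) * ‖g - gradF w0‖^2
      ≤ (η'/2) * (11 * ‖g - gb‖^2 + (11/10) * ‖gb - gradF w0‖^2) :=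
    mul_le_mul_of_nonneg_left hnd2 (by positivity)
  have p2 : (11/2) * η' * ‖g - gb‖^2
      ≤ (11/2) * η' * ((5/81) * (L*η') * (Nv + ‖gradF w0‖^2)) :=
    mul_le_mul_of_nonneg_left he2 (by positivity)
  have p3 : (L*η') * (η' * ‖gradF w0‖^2) ≤ (1/10) * (η' * ‖gradF w0‖^2) :=
    mul_le_mul_of_nonneg_right hs10 (mul_nonneg hη'pos.le hG2)
  linarith only [hsm2, p1, p2, p3]


set_option maxHeartbeats 1000000 in
/-- Deterministic per-path Local SGD convergence bound over `T`
rounds: with `η̃ = ηK ≤ 1/(10Lδ²)`,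
`(1/T) Σ_{t<T} ‖∇F(w_t)‖² ≤ (98/45)(F(w₀) − F*)/(η̃T)
  + (98/45)(1/T) Σ_{t<T} ‖ḡ_t − ∇F(w_t)‖² + (40/45) L η̃ (θ² + σ²)/δ²`. -/
theorem local_sgd_convergence_per_path
    {d : ℕ} {M K : ℕ} (hM : 0 < M) (hK : 0 < K)
    (η L σ θ δ : ℝ) (hη : 0 < η) (hθ : 0 ≤ θ) (hδ : 1 ≤ δ)
    (hstep : η * K ≤ 1 / (10 * L * δ ^ 2))
    (X : Fin M → Type*)
    (f : ∀ m, EuclideanSpace ℝ (Fin d) → X m → ℝ)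
    (gradf : ∀ m, EuclideanSpace ℝ (Fin d) → X m → EuclideanSpace ℝ (Fin d))
    (hfdiff : ∀ m x u, HasGradientAt (fun v => f m v x) (gradf m u x) u)
    (hflip : ∀ m x u v, ‖gradf m u x - gradf m v x‖ ≤ L * ‖u - v‖)
    (Fm : Fin M → EuclideanSpace ℝ (Fin d) → ℝ)
    (gradFm : Fin M → EuclideanSpace ℝ (Fin d) → EuclideanSpace ℝ (Fin d))
    (hFmdiff : ∀ m u, HasGradientAt (Fm m) (gradFm m u) u)
    (hnoise : ∀ m u x, ‖gradf m u x - gradFm m u‖ ≤ σ)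
    (F : EuclideanSpace ℝ (Fin d) → ℝ)
    (hF : ∀ u, F u = (1 / (M : ℝ)) * ∑ m : Fin M, Fm m u)
    (gradF : EuclideanSpace ℝ (Fin d) → EuclideanSpace ℝ (Fin d))
    (hFdiff : ∀ u, HasGradientAt F (gradF u) u)
    (hsmooth : ∀ w₁ w₂, F w₂ ≤ F w₁ + ⟪gradF w₁, w₂ - w₁⟫ + L / 2 * ‖w₂ - w₁‖ ^ 2)
    (Fstar : ℝ) (hlb : ∀ u, Fstar ≤ F u)
    (hbgd : ∀ u, (1 / (M : ℝ)) * ∑ m : Fin M, ‖gradFm m u‖ ^ 2 ≤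
      θ ^ 2 + δ ^ 2 * ‖gradF u‖ ^ 2)
    (T : ℕ) (hT : 1 ≤ T)
    (xs : ℕ → ∀ m : Fin M, ℕ → X m)
    (w : ℕ → EuclideanSpace ℝ (Fin d))
    (wl : ℕ → Fin M → ℕ → EuclideanSpace ℝ (Fin d))
    (hwl0 : ∀ t < T, ∀ m, wl t m 0 = w t)
    (hwlrec : ∀ t < T, ∀ m, ∀ k < K,
      wl t m (k + 1) = wl t m k - η • gradf m (wl t m k) (xs t m k))
    (hagg : ∀ t < T, w (t + 1) = (1 / (M : ℝ)) • ∑ m : Fin M, wl t m K) :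
    (1 / (T : ℝ)) * ∑ t ∈ Finset.range T, ‖gradF (w t)‖ ^ 2 ≤
      (98 / 45 : ℝ) * (F (w 0) - Fstar) / ((η * K) * T) +
        (98 / 45 : ℝ) * ((1 / (T : ℝ)) * ∑ t ∈ Finset.range T,
          ‖(1 / ((M : ℝ) * K)) •
              (∑ m : Fin M, ∑ k ∈ Finset.range K, gradf m (w t) (xs t m k)) -
            gradF (w t)‖ ^ 2) +
        (40 / 45 : ℝ) * L * (η * K) * (θ ^ 2 + σ ^ 2) / δ ^ 2 := by
  have hKR : (0:ℝ) < (K:ℝ) := by exact_mod_cast hK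
  have hTR : (0:ℝ) < (T:ℝ) := by exact_mod_cast hT
  have hη' : (0:ℝ) < η * K := by positivity
  have hδ2pos : (0:ℝ) < δ ^ 2 := by nlinarith only [hδ]
  have hL : 0 < L := by
    by_contra h
    push_neg at h
    have h1 : 1 / (10 * L * δ ^ 2) ≤ 0 := by
      rcases lt_or_eq_of_le h with h' | h'
      · apply le_of_lt
        apply div_neg_of_pos_of_neg one_pos
        nlinarith only [h', hδ2pos]
      · rw [h']; norm_num
    linarith only [hstep, h1, hη']
  have hσ : 0 ≤ σ := le_trans (norm_nonneg _) (hnoise ⟨0, hM⟩ (w 0) (xs 0 ⟨0, hM⟩ 0))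
  -- per-round bound
  have hround : ∀ t < T,
      (151/324 : ℝ) * (η * K) * ‖gradF (w t)‖ ^ 2 ≤
        F (w t) - F (w (t+1)) +
        (11/20 : ℝ) * (η * K) *
          ‖(1 / ((M : ℝ) * K)) •
              (∑ m : Fin M, ∑ k ∈ Finset.range K, gradf m (w t) (xs t m k)) -
            gradF (w t)‖ ^ 2 +
        (55/162 : ℝ) * L * (η * K) ^ 2 * (θ ^ 2 + σ ^ 2) / δ ^ 2 := by
    intro t ht
    exact localSGD_round hM hK η L σ θ δ hη hσ hδ hL hstep X gradf hflip gradFm hnoise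
      F gradF (xs t) (w t) (w (t+1)) (hsmooth (w t) (w (t+1))) (hbgd (w t))
      (wl t) (hwl0 t ht) (hwlrec t ht) (hagg t ht)
  -- sum over rounds
  have hsum : (151/324 : ℝ) * (η * K) * (∑ t ∈ Finset.range T, ‖gradF (w t)‖ ^ 2) ≤
      (F (w 0) - Fstar) +
      (11/20 : ℝ) * (η * K) * (∑ t ∈ Finset.range T,
        ‖(1 / ((M : ℝ) * K)) •
            (∑ m : Fin M, ∑ k ∈ Finset.range K, gradf m (w t) (xs t m k)) -
          gradF (w t)‖ ^ 2) +
      (T : ℝ) * ((55/162 : ℝ) * L * (η * K) ^ 2 * (θ ^ 2 + σ ^ 2) / δ ^ 2) := by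
    have h1 : ∑ t ∈ Finset.range T, ((151/324 : ℝ) * (η * K) * ‖gradF (w t)‖ ^ 2) ≤
        ∑ t ∈ Finset.range T, (F (w t) - F (w (t+1)) +
          (11/20 : ℝ) * (η * K) *
            ‖(1 / ((M : ℝ) * K)) •
                (∑ m : Fin M, ∑ k ∈ Finset.range K, gradf m (w t) (xs t m k)) -
              gradF (w t)‖ ^ 2 +
          (55/162 : ℝ) * L * (η * K) ^ 2 * (θ ^ 2 + σ ^ 2) / δ ^ 2) :=
      Finset.sum_le_sum (fun t ht => hround t (Finset.mem_range.mp ht))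
    rw [Finset.sum_add_distrib, Finset.sum_add_distrib, Finset.sum_range_sub' (fun t => F (w t)),
      Finset.sum_const, Finset.card_range, nsmul_eq_mul, ← Finset.mul_sum, ← Finset.mul_sum] at h1
    have h2 : F (w 0) - F (w T) ≤ F (w 0) - Fstar := by linarith only [hlb (w T)]
    linarith only [h1, h2]
  -- final arithmetic
  set SG : ℝ := ∑ t ∈ Finset.range T, ‖gradF (w t)‖ ^ 2 with hSGdef
  set SB : ℝ := ∑ t ∈ Finset.range T,
    ‖(1 / ((M : ℝ) * K)) •
        (∑ m : Fin M, ∑ k ∈ Finset.range K, gradf m (w t) (xs t m k)) -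
      gradF (w t)‖ ^ 2 with hSBdef
  have hSG0 : 0 ≤ SG := Finset.sum_nonneg (fun t _ => by positivity)
  have hSB0 : 0 ≤ SB := Finset.sum_nonneg (fun t _ => by positivity)
  have hD0 : 0 ≤ F (w 0) - Fstar := by linarith only [hlb (w 0)]
  have hC0 : (0:ℝ) ≤ L * (η * K) * (θ ^ 2 + σ ^ 2) / δ ^ 2 := by positivity
  have hmul : (η * K) * SG ≤ (98/45 : ℝ) * (F (w 0) - Fstar) +
      (98/45 : ℝ) * ((η * K) * SB) +
      (40/45 : ℝ) * ((η * K) * (T : ℝ) * (L * (η * K) * (θ ^ 2 + σ ^ 2) / δ ^ 2)) := by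
    have e1 : (T : ℝ) * ((55/162 : ℝ) * L * (η * K) ^ 2 * (θ ^ 2 + σ ^ 2) / δ ^ 2)
        = (55/162 : ℝ) * ((η * K) * (T : ℝ) * (L * (η * K) * (θ ^ 2 + σ ^ 2) / δ ^ 2)) := by
      ring
    rw [e1] at hsum
    have q1 : 0 ≤ (η * K) * SB := mul_nonneg hη'.le hSB0
    have q2 : 0 ≤ (η * K) * (T : ℝ) * (L * (η * K) * (θ ^ 2 + σ ^ 2) / δ ^ 2) :=
      mul_nonneg (mul_nonneg hη'.le hTR.le) hC0
    linarith only [hsum, hD0, q1, q2]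
  have hend : (1 / (T : ℝ)) * SG = ((η * K) * SG) / ((η * K) * T) := by
    field_simp
  rw [hend]
  have hrhs : (98 / 45 : ℝ) * (F (w 0) - Fstar) / ((η * K) * T) +
        (98 / 45 : ℝ) * ((1 / (T : ℝ)) * SB) +
        (40 / 45 : ℝ) * L * (η * K) * (θ ^ 2 + σ ^ 2) / δ ^ 2
      = ((98/45 : ℝ) * (F (w 0) - Fstar) +
        (98/45 : ℝ) * ((η * K) * SB) +
        (40/45 : ℝ) * ((η * K) * (T : ℝ) * (L * (η * K) * (θ ^ 2 + σ ^ 2) / δ ^ 2)))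
        / ((η * K) * T) := by
    field_simp
  rw [hrhs]
  exact (div_le_div_iff_of_pos_right (by positivity)).mpr hmul
end

section
/- Local SGD with Momentum drift bound (per sample path): let M ≥ 1 and K ≥ 2 be integers, β ∈ (0, 1], η > 0 with ηKL ≤ 1/(2β). For each m ∈ [M], let f_m(·; x) : ℝ^d → ℝ be differentiable with L-Lipschitz gradient in its first argument, F_m : ℝ^d → ℝ differentiable with ‖∇f_m(u; x) − ∇F_m(u)‖ ≤ σ for all u, x, and let F = (1/M) Σ_m F_m. Fix w, u, v ∈ ℝ^d and samples x^{(m,k)} ∈ Ω_m, and define local iterates with momentum by w^{(m,0)} = w, v^{(m,k)} = β ∇f_m(w^{(m,k)}; x^{(m,k)}) + (1 − β) v, and w^{(m,k+1)} = w^{(m,k)} − η v^{(m,k)} for k = 0,…,K−1. Then (1/(MK)) Σ_{m=1}^M Σ_{k=0}^{K−1} ‖w^{(m,k)} − w‖² ≤ 16 (ηβK)² σ² + 32 (η(1−β)K)² (‖∇F(u) − v‖² + ‖∇F(u)‖²) + 16 (ηβK)² (1/M) Σ_{m=1}^M ‖∇F_m(w)‖². -/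
open scoped RealInnerProductSpace

/-- Local SGD with Momentum drift bound (per sample path): with
`β ∈ (0,1]`, `ηKL ≤ 1/(2β)`, and local momentum iterates starting at `w` with
server momentum `v` (and `u` the previous global iterate),
`(1/(MK)) Σ_{m,k} ‖w^{(m,k)} − w‖² ≤ 16(ηβK)²σ²
  + 32(η(1−β)K)² (‖∇F(u) − v‖² + ‖∇F(u)‖²) + 16(ηβK)² (1/M) Σ_m ‖∇F_m(w)‖²`. -/
theorem local_sgd_momentum_drift_bound
    {d : ℕ} {M K : ℕ} (hM : 1 ≤ M) (hK : 2 ≤ K)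
    (β η L σ : ℝ) (hβ0 : 0 < β) (hβ1 : β ≤ 1) (hη : 0 < η)
    (hstep : η * K * L ≤ 1 / (2 * β))
    (X : Fin M → Type*)
    (f : ∀ m, EuclideanSpace ℝ (Fin d) → X m → ℝ)
    (gradf : ∀ m, EuclideanSpace ℝ (Fin d) → X m → EuclideanSpace ℝ (Fin d))
    (hfdiff : ∀ m x u, HasGradientAt (fun v => f m v x) (gradf m u x) u)
    (hflip : ∀ m x u v, ‖gradf m u x - gradf m v x‖ ≤ L * ‖u - v‖)
    (Fm : Fin M → EuclideanSpace ℝ (Fin d) → ℝ)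
    (gradFm : Fin M → EuclideanSpace ℝ (Fin d) → EuclideanSpace ℝ (Fin d))
    (hFmdiff : ∀ m u, HasGradientAt (Fm m) (gradFm m u) u)
    (hnoise : ∀ m u x, ‖gradf m u x - gradFm m u‖ ≤ σ)
    (F : EuclideanSpace ℝ (Fin d) → ℝ)
    (hF : ∀ u, F u = (1 / (M : ℝ)) * ∑ m : Fin M, Fm m u)
    (gradF : EuclideanSpace ℝ (Fin d) → EuclideanSpace ℝ (Fin d))
    (hFdiff : ∀ u, HasGradientAt F (gradF u) u)
    (w u v : EuclideanSpace ℝ (Fin d))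
    (xs : ∀ m : Fin M, ℕ → X m)
    (wl : Fin M → ℕ → EuclideanSpace ℝ (Fin d))
    (vl : Fin M → ℕ → EuclideanSpace ℝ (Fin d))
    (hwl0 : ∀ m, wl m 0 = w)
    (hvl : ∀ m, ∀ k < K, vl m k = β • gradf m (wl m k) (xs m k) + (1 - β) • v)
    (hwlrec : ∀ m, ∀ k < K, wl m (k + 1) = wl m k - η • vl m k) :
    (1 / ((M : ℝ) * K)) * ∑ m : Fin M, ∑ k ∈ Finset.range K, ‖wl m k - w‖ ^ 2 ≤
      16 * (η * β * K) ^ 2 * σ ^ 2 +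
        32 * (η * (1 - β) * K) ^ 2 * (‖gradF u - v‖ ^ 2 + ‖gradF u‖ ^ 2) +
        16 * (η * β * K) ^ 2 * ((1 / (M : ℝ)) * ∑ m : Fin M, ‖gradFm m w‖ ^ 2) := by
  classical
  have hMpos : (0:ℝ) < M := by exact_mod_cast hM
  have hKpos : (0:ℝ) < K := by exact_mod_cast (by omega : 0 < K)
  have hm0 : (0:ℕ) < M := hM
  have hσ : 0 ≤ σ := le_trans (norm_nonneg _) (hnoise ⟨0, hm0⟩ w (xs ⟨0, hm0⟩ 0))
  set L' : ℝ := max L 0 with hL'def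
  have hL'0 : 0 ≤ L' := le_max_right _ _
  have hflip' : ∀ m x a b, ‖gradf m a x - gradf m b x‖ ≤ L' * ‖a - b‖ := by
    intro m x a b
    exact (hflip m x a b).trans (mul_le_mul_of_nonneg_right (le_max_left _ _) (norm_nonneg _))
  have hstep' : 2 * (η * β * (K:ℝ) * L') ≤ 1 := by
    rcases le_or_gt L 0 with h | h
    · rw [hL'def, max_eq_right h]; nlinarith
    · rw [hL'def, max_eq_left h.le]
      have h2β : (0:ℝ) < 2 * β := by linarith
      rw [le_div_iff₀ h2β] at hstep
      nlinarith [hstep]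
  -- the per-client constant
  set A : Fin M → ℝ := fun m =>
    β * σ + β * ‖gradFm m w‖ + (1 - β) * (‖gradF u - v‖ + ‖gradF u‖) with hAdef
  have hA0 : ∀ m, 0 ≤ A m := by
    intro m
    have h1 : 0 ≤ β * σ := mul_nonneg hβ0.le hσ
    have h2 : 0 ≤ β * ‖gradFm m w‖ := mul_nonneg hβ0.le (norm_nonneg _)
    have h3 : 0 ≤ (1 - β) * (‖gradF u - v‖ + ‖gradF u‖) :=
      mul_nonneg (by linarith) (add_nonneg (norm_nonneg _) (norm_nonneg _))
    simp only [hAdef]; linarith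
  -- partial sums representation
  have hdiff : ∀ m k, k ≤ K → wl m k - w = -(η • ∑ j ∈ Finset.range k, vl m j) := by
    intro m k
    induction k with
    | zero => intro _; simp [hwl0]
    | succ k ih =>
      intro hk
      have hkK : k < K := Nat.lt_of_succ_le hk
      rw [hwlrec m k hkK, sub_right_comm, ih hkK.le, Finset.sum_range_succ, smul_add]
      abel
  -- key drift bound
  have key : ∀ m k, k ≤ K → ‖wl m k - w‖ ≤ 2 * η * K * A m := by
    intro m k
    induction k using Nat.strong_induction_on with
    | _ k ih =>
    intro hk
    have hC : 0 ≤ β * L' * (2 * η * (K:ℝ) * A m) + A m := by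
      have h1 : 0 ≤ β * L' * (2 * η * (K:ℝ) * A m) :=
        mul_nonneg (mul_nonneg hβ0.le hL'0)
          (mul_nonneg (mul_nonneg (by linarith) hKpos.le) (hA0 m))
      linarith [hA0 m]
    have hvbound : ∀ j ∈ Finset.range k,
        ‖vl m j‖ ≤ β * L' * (2 * η * (K:ℝ) * A m) + A m := by
      intro j hj
      have hjk : j < k := Finset.mem_range.mp hj
      have hjK : j < K := lt_of_lt_of_le hjk hk
      have hwj : ‖wl m j - w‖ ≤ 2 * η * K * A m := ih j hjk hjK.le
      rw [hvl m j hjK]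
      have hdecomp : β • gradf m (wl m j) (xs m j) + (1 - β) • v =
          β • (gradf m (wl m j) (xs m j) - gradf m w (xs m j))
          + β • (gradf m w (xs m j) - gradFm m w)
          + β • gradFm m w
          + (1 - β) • (v - gradF u)
          + (1 - β) • gradF u := by module
      rw [hdecomp]
      have h1 : ‖β • (gradf m (wl m j) (xs m j) - gradf m w (xs m j))‖
          ≤ β * (L' * (2 * η * K * A m)) := by
        rw [norm_smul, Real.norm_eq_abs, abs_of_pos hβ0]
        exact mul_le_mul_of_nonneg_left
          ((hflip' m (xs m j) _ _).trans (mul_le_mul_of_nonneg_left hwj hL'0)) hβ0.le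
      have h2 : ‖β • (gradf m w (xs m j) - gradFm m w)‖ ≤ β * σ := by
        rw [norm_smul, Real.norm_eq_abs, abs_of_pos hβ0]
        exact mul_le_mul_of_nonneg_left (hnoise m w (xs m j)) hβ0.le
      have h3 : ‖β • gradFm m w‖ = β * ‖gradFm m w‖ := by
        rw [norm_smul, Real.norm_eq_abs, abs_of_pos hβ0]
      have h4 : ‖(1 - β) • (v - gradF u)‖ = (1 - β) * ‖gradF u - v‖ := by
        rw [norm_smul, Real.norm_eq_abs, abs_of_nonneg (by linarith : (0:ℝ) ≤ 1 - β),
          norm_sub_rev]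
      have h5 : ‖(1 - β) • gradF u‖ = (1 - β) * ‖gradF u‖ := by
        rw [norm_smul, Real.norm_eq_abs, abs_of_nonneg (by linarith : (0:ℝ) ≤ 1 - β)]
      have e1 := norm_add_le (β • (gradf m (wl m j) (xs m j) - gradf m w (xs m j))
          + β • (gradf m w (xs m j) - gradFm m w) + β • gradFm m w
          + (1 - β) • (v - gradF u)) ((1 - β) • gradF u)
      have e2 := norm_add_le (β • (gradf m (wl m j) (xs m j) - gradf m w (xs m j))
          + β • (gradf m w (xs m j) - gradFm m w) + β • gradFm m w)
          ((1 - β) • (v - gradF u))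
      have e3 := norm_add_le (β • (gradf m (wl m j) (xs m j) - gradf m w (xs m j))
          + β • (gradf m w (xs m j) - gradFm m w)) (β • gradFm m w)
      have e4 := norm_add_le (β • (gradf m (wl m j) (xs m j) - gradf m w (xs m j)))
          (β • (gradf m w (xs m j) - gradFm m w))
      have hAm : A m = β * σ + β * ‖gradFm m w‖ + (1 - β) * (‖gradF u - v‖ + ‖gradF u‖) :=
        rfl
      linarith [e1, e2, e3, e4, h1, h2, h3, h4, h5, hAm]
    have hsum : ∑ j ∈ Finset.range k, ‖vl m j‖
        ≤ (k:ℝ) * (β * L' * (2 * η * (K:ℝ) * A m) + A m) := by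
      calc ∑ j ∈ Finset.range k, ‖vl m j‖
          ≤ ∑ _j ∈ Finset.range k, (β * L' * (2 * η * (K:ℝ) * A m) + A m) :=
            Finset.sum_le_sum hvbound
        _ = (k:ℝ) * (β * L' * (2 * η * (K:ℝ) * A m) + A m) := by
            rw [Finset.sum_const, Finset.card_range, nsmul_eq_mul]
    have hnorm : ‖wl m k - w‖ ≤ η * ∑ j ∈ Finset.range k, ‖vl m j‖ := by
      rw [hdiff m k hk, norm_neg, norm_smul, Real.norm_eq_abs, abs_of_pos hη]
      exact mul_le_mul_of_nonneg_left (norm_sum_le _ _) hη.le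
    have hkK : (k:ℝ) ≤ (K:ℝ) := by exact_mod_cast hk
    have step1 : η * ((k:ℝ) * (β * L' * (2 * η * (K:ℝ) * A m) + A m))
        ≤ η * ((K:ℝ) * (β * L' * (2 * η * (K:ℝ) * A m) + A m)) :=
      mul_le_mul_of_nonneg_left (mul_le_mul_of_nonneg_right hkK hC) hη.le
    have step2 : η * ((K:ℝ) * (β * L' * (2 * η * (K:ℝ) * A m) + A m))
        ≤ 2 * η * (K:ℝ) * A m := by
      nlinarith [mul_nonneg (by linarith : (0:ℝ) ≤ 1 - 2 * (η * β * (K:ℝ) * L'))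
        (mul_nonneg (mul_nonneg hη.le hKpos.le) (hA0 m))]
    have := mul_le_mul_of_nonneg_left hsum hη.le
    linarith
  -- sum over k
  have sumk : ∀ m, ∑ k ∈ Finset.range K, ‖wl m k - w‖ ^ 2
      ≤ (K:ℝ) * (2 * η * (K:ℝ) * A m) ^ 2 := by
    intro m
    calc ∑ k ∈ Finset.range K, ‖wl m k - w‖ ^ 2
        ≤ ∑ _k ∈ Finset.range K, (2 * η * (K:ℝ) * A m) ^ 2 := by
          refine Finset.sum_le_sum fun k hk => ?_
          exact pow_le_pow_left₀ (norm_nonneg _)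
            (key m k (Finset.mem_range.mp hk).le) 2
      _ = (K:ℝ) * (2 * η * (K:ℝ) * A m) ^ 2 := by
          rw [Finset.sum_const, Finset.card_range, nsmul_eq_mul]
  -- per-client squared bound
  have permB : ∀ m, (K:ℝ) * (2 * η * (K:ℝ) * A m) ^ 2
      ≤ (K:ℝ) * (16 * (η * β * (K:ℝ)) ^ 2 * σ ^ 2
        + 32 * (η * (1 - β) * (K:ℝ)) ^ 2 * (‖gradF u - v‖ ^ 2 + ‖gradF u‖ ^ 2)
        + 16 * (η * β * (K:ℝ)) ^ 2 * ‖gradFm m w‖ ^ 2) := by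
    intro m
    refine mul_le_mul_of_nonneg_left ?_ hKpos.le
    simp only [hAdef]
    linarith [sq_nonneg (η * (K:ℝ) * (β * σ - β * ‖gradFm m w‖)),
      sq_nonneg (η * (K:ℝ) * (β * σ - (1 - β) * ‖gradF u - v‖)),
      sq_nonneg (η * (K:ℝ) * (β * σ - (1 - β) * ‖gradF u‖)),
      sq_nonneg (η * (K:ℝ) * (β * ‖gradFm m w‖ - (1 - β) * ‖gradF u - v‖)),
      sq_nonneg (η * (K:ℝ) * (β * ‖gradFm m w‖ - (1 - β) * ‖gradF u‖)),
      sq_nonneg (η * (K:ℝ) * ((1 - β) * ‖gradF u - v‖ - (1 - β) * ‖gradF u‖)),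
      sq_nonneg (η * (1 - β) * (K:ℝ) * ‖gradF u - v‖),
      sq_nonneg (η * (1 - β) * (K:ℝ) * ‖gradF u‖)]
  -- assemble
  have hfrac : (0:ℝ) ≤ 1 / ((M:ℝ) * K) := by positivity
  calc (1 / ((M : ℝ) * K)) * ∑ m : Fin M, ∑ k ∈ Finset.range K, ‖wl m k - w‖ ^ 2
      ≤ (1 / ((M : ℝ) * K)) * ∑ m : Fin M,
          ((K:ℝ) * (16 * (η * β * (K:ℝ)) ^ 2 * σ ^ 2
            + 32 * (η * (1 - β) * (K:ℝ)) ^ 2 * (‖gradF u - v‖ ^ 2 + ‖gradF u‖ ^ 2)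
            + 16 * (η * β * (K:ℝ)) ^ 2 * ‖gradFm m w‖ ^ 2)) := by
        refine mul_le_mul_of_nonneg_left (Finset.sum_le_sum fun m _ => ?_) hfrac
        exact (sumk m).trans (permB m)
    _ = 16 * (η * β * K) ^ 2 * σ ^ 2 +
        32 * (η * (1 - β) * K) ^ 2 * (‖gradF u - v‖ ^ 2 + ‖gradF u‖ ^ 2) +
        16 * (η * β * K) ^ 2 * ((1 / (M : ℝ)) * ∑ m : Fin M, ‖gradFm m w‖ ^ 2) := by
        simp only [mul_add, Finset.sum_add_distrib, Finset.sum_const, Finset.card_univ,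
          Fintype.card_fin, nsmul_eq_mul, ← Finset.mul_sum]
        field_simp
end

section
/- Recursive bound on local gradient norms under momentum updates (per sample path): let F_1,…,F_M : ℝ^d → ℝ each be differentiable with L-Lipschitz gradient and F = (1/M) Σ_{m=1}^M F_m. Let γ > 0, t ≥ 1, and let w_0, w_1, …, w_t ∈ ℝ^d and v_1, …, v_t ∈ ℝ^d satisfy w_j = w_{j−1} − γ v_j for j = 1,…,t. Then (1/M) Σ_{m=1}^M ‖∇F_m(w_t)‖² ≤ 3 · (1/M) Σ_{m=1}^M ‖∇F_m(w_0)‖² + 6(1 + t) γ² L² Σ_{j=0}^{t−1} (‖∇F(w_j) − v_{j+1}‖² + ‖∇F(w_j)‖²). -/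
open scoped RealInnerProductSpace

/-- Recursive bound on local gradient norms under momentum
updates (per sample path): for server updates `w_j = w_{j−1} − γ v_j`, `j = 1,…,t`,
`(1/M) Σ_m ‖∇F_m(w_t)‖² ≤ 3 (1/M) Σ_m ‖∇F_m(w₀)‖²
  + 6(1+t) γ² L² Σ_{j<t} (‖∇F(w_j) − v_{j+1}‖² + ‖∇F(w_j)‖²)`. -/
theorem momentum_local_gradient_recursive_bound
    {d : ℕ} {M : ℕ} (hM : 0 < M)
    (L γ : ℝ) (hγ : 0 < γ)
    (Fm : Fin M → EuclideanSpace ℝ (Fin d) → ℝ)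
    (gradFm : Fin M → EuclideanSpace ℝ (Fin d) → EuclideanSpace ℝ (Fin d))
    (hFmdiff : ∀ m u, HasGradientAt (Fm m) (gradFm m u) u)
    (hFmlip : ∀ m u v, ‖gradFm m u - gradFm m v‖ ≤ L * ‖u - v‖)
    (F : EuclideanSpace ℝ (Fin d) → ℝ)
    (hF : ∀ u, F u = (1 / (M : ℝ)) * ∑ m : Fin M, Fm m u)
    (gradF : EuclideanSpace ℝ (Fin d) → EuclideanSpace ℝ (Fin d))
    (hFdiff : ∀ u, HasGradientAt F (gradF u) u)
    (t : ℕ) (ht : 1 ≤ t)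
    (w v : ℕ → EuclideanSpace ℝ (Fin d))
    (hupd : ∀ j, 1 ≤ j → j ≤ t → w j = w (j - 1) - γ • v j) :
    (1 / (M : ℝ)) * ∑ m : Fin M, ‖gradFm m (w t)‖ ^ 2 ≤
      3 * ((1 / (M : ℝ)) * ∑ m : Fin M, ‖gradFm m (w 0)‖ ^ 2) +
        6 * (1 + t) * γ ^ 2 * L ^ 2 *
          ∑ j ∈ Finset.range t,
            (‖gradF (w j) - v (j + 1)‖ ^ 2 + ‖gradF (w j)‖ ^ 2) := by
  -- telescoping: w t = w 0 - γ • ∑_{j<t} v (j+1)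
  have hw : ∀ s, s ≤ t → w s = w 0 - γ • ∑ j ∈ Finset.range s, v (j + 1) := by
    intro s hs
    induction s with
    | zero => simp
    | succ n ih =>
      have h1 := hupd (n + 1) (Nat.succ_le_succ (Nat.zero_le n)) hs
      simp only [Nat.add_sub_cancel] at h1
      rw [h1, ih (Nat.le_of_succ_le hs), Finset.sum_range_succ, smul_add,
        sub_sub]
  have hwt : w t - w 0 = -(γ • ∑ j ∈ Finset.range t, v (j + 1)) := by
    rw [hw t le_rfl]; abel
  set S := ∑ j ∈ Finset.range t, (‖gradF (w j) - v (j + 1)‖ ^ 2 + ‖gradF (w j)‖ ^ 2) with hS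
  have hSnn : 0 ≤ S := Finset.sum_nonneg fun j _ => by positivity
  -- bound on ‖w t - w 0‖²
  have hdisp : ‖w t - w 0‖ ^ 2 ≤ γ ^ 2 * (t * (2 * S)) := by
    rw [hwt, norm_neg, norm_smul, mul_pow, Real.norm_eq_abs, sq_abs]
    have h1 : ‖∑ j ∈ Finset.range t, v (j + 1)‖ ^ 2 ≤
        t * ∑ j ∈ Finset.range t, ‖v (j + 1)‖ ^ 2 := by
      calc ‖∑ j ∈ Finset.range t, v (j + 1)‖ ^ 2
          ≤ (∑ j ∈ Finset.range t, ‖v (j + 1)‖) ^ 2 := by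
            have := norm_sum_le (Finset.range t) fun j => v (j + 1)
            exact pow_le_pow_left₀ (norm_nonneg _) this 2
        _ ≤ (Finset.range t).card * ∑ j ∈ Finset.range t, ‖v (j + 1)‖ ^ 2 :=
            sq_sum_le_card_mul_sum_sq
        _ = t * ∑ j ∈ Finset.range t, ‖v (j + 1)‖ ^ 2 := by
            rw [Finset.card_range]
    have h2 : ∑ j ∈ Finset.range t, ‖v (j + 1)‖ ^ 2 ≤ 2 * S := by
      rw [hS, Finset.mul_sum]
      refine Finset.sum_le_sum fun j _ => ?_
      have hvle : ‖v (j + 1)‖ ≤ ‖gradF (w j)‖ + ‖gradF (w j) - v (j + 1)‖ := by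
        have h := norm_sub_le (gradF (w j)) (gradF (w j) - v (j + 1))
        rwa [sub_sub_cancel] at h
      have h2 := mul_self_le_mul_self (norm_nonneg (v (j + 1))) hvle
      nlinarith [sq_nonneg (‖gradF (w j)‖ - ‖gradF (w j) - v (j + 1)‖)]
    have hnn : (0:ℝ) ≤ γ ^ 2 := sq_nonneg _
    calc γ ^ 2 * ‖∑ j ∈ Finset.range t, v (j + 1)‖ ^ 2
        ≤ γ ^ 2 * (t * ∑ j ∈ Finset.range t, ‖v (j + 1)‖ ^ 2) :=
          mul_le_mul_of_nonneg_left h1 hnn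
      _ ≤ γ ^ 2 * (t * (2 * S)) := by
          refine mul_le_mul_of_nonneg_left (mul_le_mul_of_nonneg_left h2 ?_) hnn
          exact Nat.cast_nonneg t
  -- per-client bound
  have hm : ∀ m : Fin M, ‖gradFm m (w t)‖ ^ 2 ≤
      2 * ‖gradFm m (w 0)‖ ^ 2 + 2 * L ^ 2 * ‖w t - w 0‖ ^ 2 := by
    intro m
    have hlip := hFmlip m (w t) (w 0)
    have htri : ‖gradFm m (w t)‖ ≤ ‖gradFm m (w 0)‖ + ‖gradFm m (w t) - gradFm m (w 0)‖ := by
      have := norm_sub_le (gradFm m (w t)) (gradFm m (w 0))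
      have h := norm_add_le (gradFm m (w 0)) (gradFm m (w t) - gradFm m (w 0))
      rwa [add_sub_cancel] at h
    have hsq : ‖gradFm m (w t) - gradFm m (w 0)‖ ^ 2 ≤ L ^ 2 * ‖w t - w 0‖ ^ 2 := by
      have h0 : (0:ℝ) ≤ ‖gradFm m (w t) - gradFm m (w 0)‖ := norm_nonneg _
      nlinarith [hlip]
    have h2 : ‖gradFm m (w t)‖ ^ 2 ≤
        (‖gradFm m (w 0)‖ + ‖gradFm m (w t) - gradFm m (w 0)‖) ^ 2 := by
      have := mul_self_le_mul_self (norm_nonneg (gradFm m (w t))) htri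
      nlinarith [this]
    nlinarith [sq_nonneg (‖gradFm m (w 0)‖ - ‖gradFm m (w t) - gradFm m (w 0)‖)]
  have hMpos : (0:ℝ) < (M:ℝ) := Nat.cast_pos.mpr hM
  have hsum : ∑ m : Fin M, ‖gradFm m (w t)‖ ^ 2 ≤
      ∑ m : Fin M, (2 * ‖gradFm m (w 0)‖ ^ 2 + 2 * L ^ 2 * ‖w t - w 0‖ ^ 2) :=
    Finset.sum_le_sum fun m _ => hm m
  rw [Finset.sum_add_distrib, Finset.sum_const, Finset.card_univ, Fintype.card_fin] at hsum
  have key : (1 / (M : ℝ)) * ∑ m : Fin M, ‖gradFm m (w t)‖ ^ 2 ≤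
      2 * ((1 / (M : ℝ)) * ∑ m : Fin M, ‖gradFm m (w 0)‖ ^ 2) +
        2 * L ^ 2 * ‖w t - w 0‖ ^ 2 := by
    have h := mul_le_mul_of_nonneg_left hsum (le_of_lt (one_div_pos.mpr hMpos))
    calc (1 / (M : ℝ)) * ∑ m : Fin M, ‖gradFm m (w t)‖ ^ 2 ≤ _ := h
      _ = 2 * ((1 / (M : ℝ)) * ∑ m : Fin M, ‖gradFm m (w 0)‖ ^ 2) +
        2 * L ^ 2 * ‖w t - w 0‖ ^ 2 := by
        rw [← Finset.mul_sum, nsmul_eq_mul, mul_add, ← mul_assoc (1 / (M:ℝ)),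
          ← mul_assoc (1 / (M:ℝ)), one_div_mul_cancel (ne_of_gt hMpos)]
        ring
  have hgnn : (0:ℝ) ≤ (1 / (M : ℝ)) * ∑ m : Fin M, ‖gradFm m (w 0)‖ ^ 2 := by
    apply mul_nonneg (by positivity)
    exact Finset.sum_nonneg fun m _ => by positivity
  have ht1 : (1:ℝ) ≤ t := by exact_mod_cast ht
  have hL2 : (0:ℝ) ≤ L ^ 2 := sq_nonneg _
  have hfin : 2 * L ^ 2 * ‖w t - w 0‖ ^ 2 ≤ 6 * (1 + t) * γ ^ 2 * L ^ 2 * S := by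
    have := mul_le_mul_of_nonneg_left hdisp (by positivity : (0:ℝ) ≤ 2 * L ^ 2)
    calc 2 * L ^ 2 * ‖w t - w 0‖ ^ 2 ≤ 2 * L ^ 2 * (γ ^ 2 * (t * (2 * S))) := this
      _ = 4 * t * γ ^ 2 * L ^ 2 * S := by ring
      _ ≤ 6 * (1 + t) * γ ^ 2 * L ^ 2 * S := by
          have h0 : (0:ℝ) ≤ (6 + 2 * (t:ℝ)) * (γ ^ 2 * (L ^ 2 * S)) := by positivity
          nlinarith [h0]
  linarith
end
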